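/- arXiv:1812.07968 — 3 statements merged into one kernel-verified Lean document; each statement's English description precedes it below -/
import Mathlib

section
/- Let [a_i, b_i] be the i-th spectral interval of the exponential dichotomy spectrum of x_{n+1} = A(n)x_n, and let W_i(0) = ker P_{γ_{i-1}}(0) ∩ im P_{γ_i}(0) for γ_{i-1} in the (i-1)-th and γ_i in the i-th spectral gap. Then for any ξ ∈ W_i(0) \ {0}, the upper Bohl exponent satisfies β̄_A(ξ) ∈ [a_i, b_i]. -/
open Filter

attribute [local instance] Matrix.linftyOpNormedRing Matrix.linftyOpNormedAlgebra

/-- `Phi A n = X(n,0)`: forward/backward product of the coefficient matrices. -/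
noncomputable def Phi {d : ℕ} (A : ℤ → Matrix (Fin d) (Fin d) ℝ) : ℤ → Matrix (Fin d) (Fin d) ℝ
  | Int.ofNat n => ((List.range n).map (fun j => A ((n : ℤ) - 1 - j))).prod
  | Int.negSucc n => ((List.range (n + 1)).map (fun j => (A (Int.negSucc n + j))⁻¹)).prod

/-- The transition operator `X(m,n)` of the system `x_{k+1} = A(k) x_k`. -/
noncomputable def transOp {d : ℕ} (A : ℤ → Matrix (Fin d) (Fin d) ℝ) (m n : ℤ) :
    Matrix (Fin d) (Fin d) ℝ :=
  Phi A m * (Phi A n)⁻¹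

/-- The filter describing `n - m → +∞` over pairs `(m, n)`. -/
noncomputable def bohlFilter : Filter (ℤ × ℤ) :=
  Filter.comap (fun p : ℤ × ℤ => p.2 - p.1) Filter.atTop

/-- Upper Bohl exponent of the solution through `ξ`. -/
noncomputable def upperBohl {d : ℕ} (A : ℤ → Matrix (Fin d) (Fin d) ℝ) (ξ : Fin d → ℝ) : ℝ :=
  limsup (fun p : ℤ × ℤ =>
    (‖(transOp A p.2 0).mulVec ξ‖ / ‖(transOp A p.1 0).mulVec ξ‖) ^ (((p.2 - p.1 : ℤ) : ℝ)⁻¹))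
    bohlFilter

/-- Lower Bohl exponent of the solution through `ξ`. -/
noncomputable def lowerBohl {d : ℕ} (A : ℤ → Matrix (Fin d) (Fin d) ℝ) (ξ : Fin d → ℝ) : ℝ :=
  liminf (fun p : ℤ × ℤ =>
    (‖(transOp A p.2 0).mulVec ξ‖ / ‖(transOp A p.1 0).mulVec ξ‖) ^ (((p.2 - p.1 : ℤ) : ℝ)⁻¹))
    bohlFilter

/-- An invariant projector of the system `x_{k+1} = A(k) x_k`. -/
def IsInvProjector {d : ℕ} (A P : ℤ → Matrix (Fin d) (Fin d) ℝ) : Prop :=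
  ∀ k : ℤ, P k * P k = P k ∧ P (k + 1) * A k = A k * P k

/-- Exponential dichotomy on `ℤ` with projector `P` and constants `K`, `ρ`. -/
def ExpDichotomy {d : ℕ} (A P : ℤ → Matrix (Fin d) (Fin d) ℝ) (K ρ : ℝ) : Prop :=
  IsInvProjector A P ∧ 0 < K ∧ 0 < ρ ∧ ρ < 1 ∧
    (∀ k l : ℤ, l ≤ k → ‖transOp A k l * P l‖ ≤ K * ρ ^ (k - l)) ∧
    (∀ k l : ℤ, k ≤ l → ‖transOp A k l * (1 - P l)‖ ≤ K * ρ ^ (l - k))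

/-- The exponential dichotomy spectrum of `x_{k+1} = A(k)x_k`. -/
def edSpectrum {d : ℕ} (A : ℤ → Matrix (Fin d) (Fin d) ℝ) : Set ℝ :=
  {γ : ℝ | 0 < γ ∧ ¬ ∃ (P : ℤ → Matrix (Fin d) (Fin d) ℝ) (K ρ : ℝ),
    ExpDichotomy (fun n => γ⁻¹ • A n) P K ρ}


namespace BH
variable {d : ℕ} {A : ℤ → Matrix (Fin d) (Fin d) ℝ}

lemma phi_ofNat (n : ℕ) :
    Phi A (Int.ofNat n) = (List.map (fun j : ℕ => A ((n:ℤ) - 1 - j)) (List.range n)).prod := by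
  simp [Phi, List.map_eq_flatMap, List.flatMap_assoc]

lemma phi_negSucc (n : ℕ) :
    Phi A (Int.negSucc n)
      = (List.map (fun j : ℕ => (A (Int.negSucc n + j))⁻¹) (List.range (n+1))).prod := by
  simp [Phi, List.map_eq_flatMap, List.flatMap_assoc]

lemma isUnit_inv {B : Matrix (Fin d) (Fin d) ℝ} (h : IsUnit B) : IsUnit B⁻¹ := by
  rw [Matrix.isUnit_iff_isUnit_det] at h ⊢
  exact Matrix.isUnit_nonsing_inv_det _ h

lemma det_unit {B : Matrix (Fin d) (Fin d) ℝ} (h : IsUnit B) : IsUnit B.det :=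
  (Matrix.isUnit_iff_isUnit_det _).1 h

lemma phi_zero : Phi A 0 = 1 := by
  show Phi A (Int.ofNat 0) = 1
  rw [phi_ofNat]; simp

lemma isUnit_phi (hA : ∀ n, IsUnit (A n)) (n : ℤ) : IsUnit (Phi A n) := by
  cases n with
  | ofNat n =>
    rw [phi_ofNat]
    exact List.prod_isUnit (by rintro m hm; simp only [List.mem_map] at hm
                               obtain ⟨j, -, rfl⟩ := hm; exact hA _)
  | negSucc n =>
    rw [phi_negSucc]
    exact List.prod_isUnit (by rintro m hm; simp only [List.mem_map] at hm
                               obtain ⟨j, -, rfl⟩ := hm; exact isUnit_inv (hA _))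

lemma cons_prod {M : Type*} [Monoid M] (f : ℕ → M) (n : ℕ) :
    ((List.range (n+1)).map f).prod = f 0 * ((List.range n).map (fun j => f (j+1))).prod := by
  rw [List.range_succ_eq_map, List.map_cons, List.prod_cons, List.map_map]
  rfl

lemma phi_ofNat_succ (n : ℕ) :
    Phi A (Int.ofNat (n + 1)) = A n * Phi A (Int.ofNat n) := by
  rw [phi_ofNat, phi_ofNat, cons_prod]
  congr 1
  · congr 1; push_cast; ring
  · congr 1
    exact List.map_congr_left (fun j _ => by congr 1; push_cast; ring)

lemma phi_negSucc_zero : Phi A (Int.negSucc 0) = (A (-1))⁻¹ := by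
  rw [phi_negSucc]; simp [List.range_succ]

lemma phi_negSucc_succ (n : ℕ) :
    Phi A (Int.negSucc (n + 1)) = (A (Int.negSucc (n + 1)))⁻¹ * Phi A (Int.negSucc n) := by
  rw [phi_negSucc, phi_negSucc, cons_prod]
  have h1 : (fun j : ℕ => (A (Int.negSucc (n+1) + (((j+1:ℕ)):ℤ)))⁻¹)
      = fun j : ℕ => (A (Int.negSucc n + (j:ℤ)))⁻¹ := by
    funext j
    congr 1
    simp only [Int.negSucc_eq]; push_cast; ring
  have h2 : Int.negSucc (n+1) + ((0:ℕ):ℤ) = Int.negSucc (n+1) := by simp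
  rw [h2, h1]

lemma phi_succ (hA : ∀ n, IsUnit (A n)) (n : ℤ) : Phi A (n + 1) = A n * Phi A n := by
  cases n with
  | ofNat n => exact phi_ofNat_succ n
  | negSucc n =>
    cases n with
    | zero =>
      show Phi A 0 = _
      rw [phi_zero, phi_negSucc_zero, show Int.negSucc 0 = -1 from rfl,
        Matrix.mul_nonsing_inv _ (det_unit (hA _))]
    | succ m =>
      show Phi A (Int.negSucc m) = _
      rw [phi_negSucc_succ, Matrix.mul_nonsing_inv_cancel_left _ _ (det_unit (hA _))]

variable (hA : ∀ n, IsUnit (A n))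
include hA

lemma transOp_self (n : ℤ) : transOp A n n = 1 :=
  Matrix.mul_nonsing_inv _ (det_unit (isUnit_phi hA n))

lemma transOp_zero (n : ℤ) : transOp A n 0 = Phi A n := by
  rw [transOp, phi_zero, inv_one, mul_one]

lemma transOp_comp (k l j : ℤ) : transOp A k l * transOp A l j = transOp A k j := by
  rw [transOp, transOp, transOp, mul_assoc, ← mul_assoc (Phi A l)⁻¹,
    Matrix.nonsing_inv_mul _ (det_unit (isUnit_phi hA l)), one_mul]

lemma transOp_succ (k l : ℤ) : transOp A (k + 1) l = A k * transOp A k l := by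
  rw [transOp, transOp, phi_succ hA, mul_assoc]

end BH

namespace BH
variable {d : ℕ} {A : ℤ → Matrix (Fin d) (Fin d) ℝ}

lemma smul_inv_mat {c : ℝ} (hc : c ≠ 0) {B : Matrix (Fin d) (Fin d) ℝ} (hB : IsUnit B) :
    (c • B)⁻¹ = c⁻¹ • B⁻¹ := by
  apply Matrix.inv_eq_right_inv
  rw [Matrix.smul_mul, Matrix.mul_smul, smul_smul, Matrix.mul_nonsing_inv _ (det_unit hB),
    mul_inv_cancel₀ hc, one_smul]

lemma list_prod_smul (c : ℝ) (L : List (Matrix (Fin d) (Fin d) ℝ)) :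
    (L.map (fun X => c • X)).prod = c ^ L.length • L.prod := by
  induction L with
  | nil => simp
  | cons h t ih =>
    rw [List.map_cons, List.prod_cons, ih, List.prod_cons, List.length_cons,
      Matrix.smul_mul, Matrix.mul_smul, smul_smul, pow_succ, mul_comm]

lemma phi_smul (hA : ∀ n, IsUnit (A n)) {c : ℝ} (hc : c ≠ 0) (n : ℤ) :
    Phi (fun k => c • A k) n = c ^ n • Phi A n := by
  cases n with
  | ofNat n =>
    rw [phi_ofNat, phi_ofNat (A := A)]
    have : (fun j : ℕ => c • A ((n:ℤ) - 1 - j))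
        = (fun X => c • X) ∘ (fun j : ℕ => A ((n:ℤ) - 1 - j)) := rfl
    rw [this, ← List.map_map, list_prod_smul, List.length_map, List.length_range]
    norm_num
  | negSucc n =>
    rw [phi_negSucc, phi_negSucc (A := A)]
    have : (fun j : ℕ => (c • A (Int.negSucc n + j))⁻¹)
        = (fun X => c⁻¹ • X) ∘ (fun j : ℕ => (A (Int.negSucc n + j))⁻¹) := by
      funext j; exact smul_inv_mat hc (hA _)
    rw [this, ← List.map_map, list_prod_smul, List.length_map, List.length_range,
      zpow_negSucc, inv_pow]

lemma transOp_smul (hA : ∀ n, IsUnit (A n)) {c : ℝ} (hc : c ≠ 0) (k l : ℤ) :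
    transOp (fun n => c • A n) k l = c ^ (k - l) • transOp A k l := by
  rw [transOp, transOp, phi_smul hA hc, phi_smul hA hc,
    smul_inv_mat (zpow_ne_zero _ hc) (isUnit_phi hA l),
    Matrix.smul_mul, Matrix.mul_smul, smul_smul, ← zpow_neg, ← zpow_add₀ hc, sub_eq_add_neg]

section Inv
variable (hA : ∀ n, IsUnit (A n)) {P : ℤ → Matrix (Fin d) (Fin d) ℝ}
  (hP : ∀ k : ℤ, P (k + 1) * A k = A k * P k)
include hA hP

lemma P_phi : ∀ n : ℤ, P n * Phi A n = Phi A n * P 0 := by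
  intro n
  induction n using Int.induction_on with
  | zero => rw [phi_zero, one_mul, mul_one]
  | succ k ih =>
    rw [phi_succ hA, ← mul_assoc, hP, mul_assoc, ih, mul_assoc]
  | pred k ih =>
    have hdet := det_unit (hA (-(k:ℤ) - 1))
    have hphi : Phi A (-(k:ℤ) - 1) = (A (-(k:ℤ) - 1))⁻¹ * Phi A (-(k:ℤ)) := by
      have := phi_succ hA (-(k:ℤ) - 1)
      rw [sub_add_cancel] at this
      rw [this, Matrix.nonsing_inv_mul_cancel_left _ _ hdet]
    have hPA : P (-(k:ℤ) - 1) * (A (-(k:ℤ) - 1))⁻¹ = (A (-(k:ℤ) - 1))⁻¹ * P (-(k:ℤ)) := by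
      have h := hP (-(k:ℤ) - 1)
      rw [sub_add_cancel] at h
      have : P (-(k:ℤ) - 1) = (A (-(k:ℤ) - 1))⁻¹ * (P (-(k:ℤ)) * A (-(k:ℤ) - 1)) := by
        rw [h, Matrix.nonsing_inv_mul_cancel_left _ _ hdet]
      rw [this, mul_assoc, Matrix.mul_nonsing_inv_cancel_right _ _ hdet]
    rw [hphi, ← mul_assoc, hPA, mul_assoc, ih, ← mul_assoc]

lemma P_transOp (k l : ℤ) : P k * transOp A k l = transOp A k l * P l := by
  have hphil := det_unit (isUnit_phi hA l)
  have h : P 0 * (Phi A l)⁻¹ = (Phi A l)⁻¹ * P l := by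
    have : P 0 = (Phi A l)⁻¹ * (P l * Phi A l) := by
      rw [P_phi hA hP l, Matrix.nonsing_inv_mul_cancel_left _ _ hphil]
    rw [this, mul_assoc, Matrix.mul_nonsing_inv_cancel_right _ _ hphil]
  rw [transOp, ← mul_assoc, P_phi hA hP k, mul_assoc, h, ← mul_assoc]

end Inv
end BH

namespace BH
variable {d : ℕ} {A : ℤ → Matrix (Fin d) (Fin d) ℝ}

lemma ed_bounds (hA : ∀ n, IsUnit (A n)) {γ K ρ : ℝ} {P : ℤ → Matrix (Fin d) (Fin d) ℝ}
    (hγ : 0 < γ) (hED : ExpDichotomy (fun n => γ⁻¹ • A n) P K ρ) :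
    (∀ k, P k * P k = P k) ∧ (∀ k l, P k * transOp A k l = transOp A k l * P l) ∧
    (∀ k l, l ≤ k → ‖transOp A k l * P l‖ ≤ K * (γ * ρ) ^ (k - l)) ∧
    (∀ k l, k ≤ l → ‖transOp A k l * (1 - P l)‖ ≤ K * (ρ / γ) ^ (l - k)) := by
  obtain ⟨hinv, hK, hρ, hρ1, hfor, hback⟩ := hED
  have hc : (γ : ℝ)⁻¹ ≠ 0 := inv_ne_zero (ne_of_gt hγ)
  have hPA : ∀ k, P (k + 1) * A k = A k * P k := by
    intro k
    have h := (hinv k).2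
    simp only [Matrix.mul_smul, Matrix.smul_mul] at h
    exact smul_right_injective _ hc h
  have hPT := P_transOp hA hPA
  refine ⟨fun k => (hinv k).1, hPT, ?_, ?_⟩
  · intro k l hlk
    have h := hfor k l hlk
    rw [transOp_smul hA hc, Matrix.smul_mul, norm_smul, Real.norm_eq_abs,
      abs_of_pos (zpow_pos (inv_pos.mpr hγ) _), inv_zpow, ← zpow_neg,
      ← Real.rpow_intCast γ (-(k-l))] at h
    have h2 : ‖transOp A k l * P l‖ ≤ (K * ρ ^ (k - l)) / γ ^ (-(k-l) : ℤ) := by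
      rw [le_div_iff₀ (zpow_pos hγ _), mul_comm]
      rw [Real.rpow_intCast] at h
      exact h
    calc ‖transOp A k l * P l‖ ≤ (K * ρ ^ (k - l)) / γ ^ (-(k-l) : ℤ) := h2
      _ = K * (γ * ρ) ^ (k - l) := by
          rw [mul_zpow, zpow_neg, div_eq_mul_inv, inv_inv]; ring
  · intro k l hkl
    have h := hback k l hkl
    rw [transOp_smul hA hc, Matrix.smul_mul, norm_smul, Real.norm_eq_abs,
      abs_of_pos (zpow_pos (inv_pos.mpr hγ) _), inv_zpow, ← zpow_neg, neg_sub] at h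
    have h2 : ‖transOp A k l * (1 - P l)‖ ≤ (K * ρ ^ (l - k)) / γ ^ ((l-k) : ℤ) := by
      rw [le_div_iff₀ (zpow_pos hγ _), mul_comm]
      exact h
    calc ‖transOp A k l * (1 - P l)‖ ≤ (K * ρ ^ (l - k)) / γ ^ ((l-k) : ℤ) := h2
      _ = K * (ρ / γ) ^ (l - k) := by rw [div_zpow]; ring

end BH

namespace BH
variable {d : ℕ} {A : ℤ → Matrix (Fin d) (Fin d) ℝ} {ξ : Fin d → ℝ} {M : ℝ}

lemma d_pos (hξ : ξ ≠ 0) : 0 < d := by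
  rcases Nat.eq_zero_or_pos d with h | h
  · subst h
    exact absurd (funext fun i => i.elim0) hξ
  · exact h

lemma x_comp (hA : ∀ n, IsUnit (A n)) (m n : ℤ) :
    (transOp A n 0).mulVec ξ = (transOp A n m).mulVec ((transOp A m 0).mulVec ξ) := by
  rw [Matrix.mulVec_mulVec, transOp_comp hA]

lemma norm_x_pos (hA : ∀ n, IsUnit (A n)) (hξ : ξ ≠ 0) (n : ℤ) :
    0 < ‖(transOp A n 0).mulVec ξ‖ := by
  rw [norm_pos_iff]
  intro h0
  apply hξ
  have : ξ = (transOp A 0 n).mulVec ((transOp A n 0).mulVec ξ) := by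
    rw [Matrix.mulVec_mulVec, transOp_comp hA, transOp_self hA, Matrix.one_mulVec]
  rw [this, h0, Matrix.mulVec_zero]

end BH

open Filter
attribute [local instance] Matrix.linftyOpNormedRing Matrix.linftyOpNormedAlgebra
namespace BH
variable {d : ℕ} {A : ℤ → Matrix (Fin d) (Fin d) ℝ} {M : ℝ} {ξ : Fin d → ℝ}

lemma norm_transOp_le (hd : 0 < d) (hA : ∀ n, IsUnit (A n))
    (hbd : ∀ n : ℤ, ‖A n‖ ≤ M ∧ ‖(A n)⁻¹‖ ≤ M) :
    ∀ (t : ℕ) (m : ℤ), ‖transOp A (m + t) m‖ ≤ (max M 1) ^ t := by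
  haveI : Nonempty (Fin d) := Fin.pos_iff_nonempty.mp hd
  intro t
  induction t with
  | zero =>
    intro m
    simp only [Nat.cast_zero, add_zero, transOp_self hA, pow_zero]
    exact le_of_eq norm_one
  | succ t ih =>
    intro m
    have h1 : (m + (t + 1 : ℕ) : ℤ) = (m + t) + 1 := by push_cast; ring
    rw [h1, transOp_succ hA, pow_succ]
    have h2 : ‖A ((m : ℤ) + t) * transOp A (m + t) m‖ ≤ ‖A ((m : ℤ) + t)‖ * ‖transOp A (m + t) m‖ :=
      Matrix.linfty_opNorm_mul _ _
    refine h2.trans ?_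
    rw [mul_comm ((max M 1) ^ t)]
    exact mul_le_mul ((hbd _).1.trans (le_max_left _ _)) (ih m) (norm_nonneg _)
      (le_trans zero_le_one (le_max_right _ _))
lemma bohl_neBot : bohlFilter.NeBot := by
  apply Filter.comap_neBot
  intro t ht
  obtain ⟨N, hN⟩ := mem_atTop_sets.mp ht
  exact ⟨((0 : ℤ), N), by simpa using hN N le_rfl⟩

lemma bohl_eventually (N : ℤ) : ∀ᶠ p in bohlFilter, N ≤ p.2 - p.1 :=
  preimage_mem_comap (Ici_mem_atTop N)

lemma tendsto_diag : Tendsto (fun n : ℕ => ((0 : ℤ), (n : ℤ))) atTop bohlFilter := by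
  rw [bohlFilter, tendsto_comap_iff]
  have : ((fun p : ℤ × ℤ => p.2 - p.1) ∘ fun n : ℕ => ((0 : ℤ), (n : ℤ)))
      = fun n : ℕ => (n : ℤ) := by funext n; simp
  rw [this]
  exact tendsto_natCast_atTop_atTop

lemma f_nonneg (p : ℤ × ℤ) :
    0 ≤ (‖(transOp A p.2 0).mulVec ξ‖ / ‖(transOp A p.1 0).mulVec ξ‖)
      ^ (((p.2 - p.1 : ℤ) : ℝ)⁻¹) :=
  Real.rpow_nonneg (div_nonneg (norm_nonneg _) (norm_nonneg _)) _

lemma f_bounded (hA : ∀ n, IsUnit (A n)) (hbd : ∀ n : ℤ, ‖A n‖ ≤ M ∧ ‖(A n)⁻¹‖ ≤ M)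
    (hξ : ξ ≠ 0) :
    ∀ᶠ p in bohlFilter,
      (‖(transOp A p.2 0).mulVec ξ‖ / ‖(transOp A p.1 0).mulVec ξ‖)
        ^ (((p.2 - p.1 : ℤ) : ℝ)⁻¹) ≤ max M 1 := by
  filter_upwards [bohl_eventually 1] with p hp
  set t : ℕ := (p.2 - p.1).toNat with htdef
  have ht : (t : ℤ) = p.2 - p.1 := Int.toNat_of_nonneg (by omega)
  have ht1 : 1 ≤ t := by omega
  have htR : (0 : ℝ) < t := by exact_mod_cast Nat.pos_of_ne_zero (by omega)
  have hM1 : (1 : ℝ) ≤ max M 1 := le_max_right _ _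
  have hrat : ‖(transOp A p.2 0).mulVec ξ‖ / ‖(transOp A p.1 0).mulVec ξ‖
      ≤ (max M 1) ^ t := by
    rw [div_le_iff₀ (norm_x_pos hA hξ _)]
    have hcomp := x_comp (ξ := ξ) hA p.1 p.2
    have h2 : p.2 = p.1 + t := by omega
    calc ‖(transOp A p.2 0).mulVec ξ‖
        ≤ ‖transOp A p.2 p.1‖ * ‖(transOp A p.1 0).mulVec ξ‖ := by
          rw [hcomp]; exact Matrix.linfty_opNorm_mulVec _ _
      _ ≤ (max M 1) ^ t * ‖(transOp A p.1 0).mulVec ξ‖ := by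
          apply mul_le_mul_of_nonneg_right _ (norm_nonneg _)
          rw [h2]
          exact norm_transOp_le (d_pos hξ) hA hbd t p.1
  calc (‖(transOp A p.2 0).mulVec ξ‖ / ‖(transOp A p.1 0).mulVec ξ‖)
        ^ (((p.2 - p.1 : ℤ) : ℝ)⁻¹)
      ≤ ((max M 1) ^ t) ^ (((p.2 - p.1 : ℤ) : ℝ)⁻¹) :=
        Real.rpow_le_rpow (div_nonneg (norm_nonneg _) (norm_nonneg _)) hrat
          (by rw [← ht]; positivity)
    _ = max M 1 := by
        rw [← ht, ← Real.rpow_natCast (max M 1) t]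
        push_cast
        rw [← Real.rpow_mul (by positivity), mul_inv_cancel₀ (ne_of_gt htR), Real.rpow_one]

lemma tendsto_rpow_inv {c : ℝ} (hc : 0 < c) :
    Tendsto (fun N : ℕ => c ^ ((N : ℝ))⁻¹) atTop (nhds 1) := by
  have h : (fun N : ℕ => c ^ ((N : ℝ))⁻¹)
      = fun N : ℕ => Real.exp (Real.log c * ((N : ℝ))⁻¹) := by
    funext N; exact Real.rpow_def_of_pos hc _
  rw [h]
  have h2 : Tendsto (fun N : ℕ => Real.log c * ((N : ℝ))⁻¹) atTop (nhds 0) := by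
    simpa using tendsto_const_nhds.mul (tendsto_inv_atTop_nhds_zero_nat (𝕜 := ℝ))
  simpa [Function.comp_def] using (Real.continuous_exp.tendsto 0).comp h2

end BH

namespace BH
variable {d : ℕ} {A : ℤ → Matrix (Fin d) (Fin d) ℝ} {M : ℝ} {ξ : Fin d → ℝ}

lemma upperBohl_le_of_im (hA : ∀ n, IsUnit (A n))
    (hbd : ∀ n : ℤ, ‖A n‖ ≤ M ∧ ‖(A n)⁻¹‖ ≤ M) (hξ : ξ ≠ 0)
    {γ K ρ : ℝ} {P : ℤ → Matrix (Fin d) (Fin d) ℝ}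
    (hγ : 0 < γ) (hED : ExpDichotomy (fun n => γ⁻¹ • A n) P K ρ)
    (him : (P 0).mulVec ξ = ξ) : upperBohl A ξ ≤ γ * ρ := by
  haveI : bohlFilter.NeBot := bohl_neBot
  obtain ⟨-, hPT, hfor, -⟩ := ed_bounds hA hγ hED
  have hρ : 0 < ρ := hED.2.2.1
  set K' := max K 1 with hK'def
  have hK'1 : (1 : ℝ) ≤ K' := le_max_right _ _
  have hK'0 : (0 : ℝ) < K' := lt_of_lt_of_le one_pos hK'1
  have hγρ : 0 < γ * ρ := mul_pos hγ hρ
  have main : ∀ N : ℕ, 1 ≤ N → upperBohl A ξ ≤ (γ * ρ) * K' ^ ((N : ℝ))⁻¹ := by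
    intro N hN
    have hNR : (0 : ℝ) < (N : ℝ) := by exact_mod_cast Nat.pos_of_ne_zero (by omega)
    apply limsup_le_of_le (isCoboundedUnder_le_of_le _ (fun p => f_nonneg p))
    filter_upwards [bohl_eventually (N : ℤ)] with p hp
    set t : ℤ := p.2 - p.1 with htdef
    have ht1 : (1 : ℤ) ≤ t := le_trans (by exact_mod_cast hN) hp
    have htR : (0 : ℝ) < ((t : ℤ) : ℝ) := by exact_mod_cast lt_of_lt_of_le one_pos ht1
    have hx1 : (P p.1).mulVec ((transOp A p.1 0).mulVec ξ) = (transOp A p.1 0).mulVec ξ := by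
      rw [Matrix.mulVec_mulVec, hPT, ← Matrix.mulVec_mulVec, him]
    have hle : p.1 ≤ p.2 := by omega
    have hbound : ‖(transOp A p.2 0).mulVec ξ‖
        ≤ (K * (γ * ρ) ^ t) * ‖(transOp A p.1 0).mulVec ξ‖ := by
      calc ‖(transOp A p.2 0).mulVec ξ‖
          = ‖(transOp A p.2 p.1 * P p.1).mulVec ((transOp A p.1 0).mulVec ξ)‖ := by
            rw [← Matrix.mulVec_mulVec, hx1, Matrix.mulVec_mulVec, transOp_comp hA]
        _ ≤ ‖transOp A p.2 p.1 * P p.1‖ * ‖(transOp A p.1 0).mulVec ξ‖ :=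
            Matrix.linfty_opNorm_mulVec _ _
        _ ≤ (K * (γ * ρ) ^ t) * ‖(transOp A p.1 0).mulVec ξ‖ :=
            mul_le_mul_of_nonneg_right (hfor p.2 p.1 hle) (norm_nonneg _)
    have hrat : ‖(transOp A p.2 0).mulVec ξ‖ / ‖(transOp A p.1 0).mulVec ξ‖
        ≤ K' * (γ * ρ) ^ t := by
      rw [div_le_iff₀ (norm_x_pos hA hξ _)]
      refine hbound.trans ?_
      exact mul_le_mul_of_nonneg_right
        (mul_le_mul_of_nonneg_right (le_max_left _ _) (le_of_lt (zpow_pos hγρ t)))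
        (norm_nonneg _)
    calc (‖(transOp A p.2 0).mulVec ξ‖ / ‖(transOp A p.1 0).mulVec ξ‖) ^ ((t : ℝ))⁻¹
        ≤ (K' * (γ * ρ) ^ t) ^ ((t : ℝ))⁻¹ :=
          Real.rpow_le_rpow (div_nonneg (norm_nonneg _) (norm_nonneg _)) hrat
            (le_of_lt (inv_pos.mpr htR))
      _ = K' ^ ((t : ℝ))⁻¹ * ((γ * ρ) ^ t) ^ ((t : ℝ))⁻¹ :=
          Real.mul_rpow (le_of_lt hK'0) (le_of_lt (zpow_pos hγρ t))
      _ = K' ^ ((t : ℝ))⁻¹ * (γ * ρ) := by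
          rw [← Real.rpow_intCast (γ * ρ) t, ← Real.rpow_mul (le_of_lt hγρ),
            mul_inv_cancel₀ (ne_of_gt htR), Real.rpow_one]
      _ ≤ K' ^ ((N : ℝ))⁻¹ * (γ * ρ) := by
          apply mul_le_mul_of_nonneg_right _ (le_of_lt hγρ)
          apply Real.rpow_le_rpow_of_exponent_le hK'1
          rw [inv_eq_one_div, inv_eq_one_div]
          exact one_div_le_one_div_of_le hNR (by exact_mod_cast hp)
      _ = (γ * ρ) * K' ^ ((N : ℝ))⁻¹ := mul_comm _ _
  have hlim : Tendsto (fun N : ℕ => (γ * ρ) * K' ^ ((N : ℝ))⁻¹) atTop (nhds (γ * ρ)) := by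
    have := (tendsto_rpow_inv hK'0).const_mul (γ * ρ)
    simpa using this
  exact ge_of_tendsto hlim ((eventually_ge_atTop 1).mono main)

end BH

namespace BH
variable {d : ℕ} {A : ℤ → Matrix (Fin d) (Fin d) ℝ} {M : ℝ} {ξ : Fin d → ℝ}

lemma le_upperBohl_of_ker (hA : ∀ n, IsUnit (A n))
    (hbd : ∀ n : ℤ, ‖A n‖ ≤ M ∧ ‖(A n)⁻¹‖ ≤ M)
    {γ K ρ : ℝ} {P : ℤ → Matrix (Fin d) (Fin d) ℝ}
    (hγ : 0 < γ) (hED : ExpDichotomy (fun n => γ⁻¹ • A n) P K ρ)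
    (hv : (1 - P 0).mulVec ξ ≠ 0) : γ / ρ ≤ upperBohl A ξ := by
  have hξ : ξ ≠ 0 := by
    rintro rfl; rw [Matrix.mulVec_zero] at hv; exact hv rfl
  haveI : bohlFilter.NeBot := bohl_neBot
  haveI : Nonempty (Fin d) := Fin.pos_iff_nonempty.mp (d_pos hξ)
  obtain ⟨hidem, hPT, hfor, hback⟩ := ed_bounds hA hγ hED
  have hK : 0 < K := hED.2.1
  have hρ : 0 < ρ := hED.2.2.1
  set v : Fin d → ℝ := (1 - P 0).mulVec ξ with hvdef
  have hPT1 : ∀ k l, (1 - P k) * transOp A k l = transOp A k l * (1 - P l) := by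
    intro k l; rw [sub_mul, mul_sub, one_mul, mul_one, hPT]
  have hidem1 : (1 - P 0) * (1 - P 0) = 1 - P 0 := by
    have h := hidem 0
    calc (1 - P 0) * (1 - P 0) = 1 - P 0 - P 0 + P 0 * P 0 := by noncomm_ring
      _ = 1 - P 0 := by rw [h]; abel
  have hPn : ∀ n, ‖P n‖ ≤ K := by
    intro n
    have h := hfor n n le_rfl
    rwa [transOp_self hA, one_mul, sub_self, zpow_zero, mul_one] at h
  have h1 : ∀ n : ℤ, (1 - P n).mulVec ((transOp A n 0).mulVec ξ) = (transOp A n 0).mulVec v := by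
    intro n; rw [Matrix.mulVec_mulVec, hPT1, ← Matrix.mulVec_mulVec]
  have hv0 : (1 - P 0).mulVec v = v := by
    rw [hvdef, Matrix.mulVec_mulVec, hidem1]
  have hvpos : 0 < ‖v‖ := norm_pos_iff.mpr hv
  have hxi : 0 < ‖ξ‖ := norm_pos_iff.mpr hξ
  set D : ℝ := K * (1 + K) with hDdef
  have hD : 0 < D := by positivity
  have hγρ : 0 < γ / ρ := div_pos hγ hρ
  -- key growth estimate
  have hkey : ∀ n : ℤ, 0 ≤ n →
      (γ / ρ) ^ n * ‖v‖ ≤ D * ‖(transOp A n 0).mulVec ξ‖ := by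
    intro n hn
    have hxvinv : (1 - P n).mulVec ((transOp A n 0).mulVec v) = (transOp A n 0).mulVec v := by
      rw [Matrix.mulVec_mulVec, hPT1, ← Matrix.mulVec_mulVec, hv0]
    have hvb : ‖v‖ ≤ K * (ρ / γ) ^ n * ‖(transOp A n 0).mulVec v‖ := by
      have hveq : v = (transOp A 0 n * (1 - P n)).mulVec ((transOp A n 0).mulVec v) := by
        rw [← Matrix.mulVec_mulVec, hxvinv, Matrix.mulVec_mulVec, transOp_comp hA,
          transOp_self hA, Matrix.one_mulVec]
      calc ‖v‖ = ‖(transOp A 0 n * (1 - P n)).mulVec ((transOp A n 0).mulVec v)‖ := by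
            rw [← hveq]
        _ ≤ ‖transOp A 0 n * (1 - P n)‖ * ‖(transOp A n 0).mulVec v‖ :=
            Matrix.linfty_opNorm_mulVec _ _
        _ ≤ K * (ρ / γ) ^ n * ‖(transOp A n 0).mulVec v‖ := by
            apply mul_le_mul_of_nonneg_right _ (norm_nonneg _)
            have hb := hback 0 n hn
            rwa [sub_zero] at hb
    have hxv_le : ‖(transOp A n 0).mulVec v‖ ≤ (1 + K) * ‖(transOp A n 0).mulVec ξ‖ := by
      rw [← h1]
      calc ‖(1 - P n).mulVec ((transOp A n 0).mulVec ξ)‖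
          ≤ ‖(1 : Matrix (Fin d) (Fin d) ℝ) - P n‖ * ‖(transOp A n 0).mulVec ξ‖ :=
            Matrix.linfty_opNorm_mulVec _ _
        _ ≤ (1 + K) * ‖(transOp A n 0).mulVec ξ‖ := by
            apply mul_le_mul_of_nonneg_right _ (norm_nonneg _)
            calc ‖(1 : Matrix (Fin d) (Fin d) ℝ) - P n‖
                ≤ ‖(1 : Matrix (Fin d) (Fin d) ℝ)‖ + ‖P n‖ := norm_sub_le _ _
              _ ≤ 1 + K := by rw [norm_one]; exact add_le_add le_rfl (hPn n)
    have h5 : ‖v‖ ≤ D * (ρ / γ) ^ n * ‖(transOp A n 0).mulVec ξ‖ := by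
      calc ‖v‖ ≤ K * (ρ / γ) ^ n * ‖(transOp A n 0).mulVec v‖ := hvb
        _ ≤ K * (ρ / γ) ^ n * ((1 + K) * ‖(transOp A n 0).mulVec ξ‖) := by
            apply mul_le_mul_of_nonneg_left hxv_le
            positivity
        _ = D * (ρ / γ) ^ n * ‖(transOp A n 0).mulVec ξ‖ := by rw [hDdef]; ring
    have hw : (0 : ℝ) < (γ / ρ) ^ n := zpow_pos hγρ n
    have hinv : (ρ / γ) ^ n = ((γ / ρ) ^ n)⁻¹ := by
      rw [← inv_zpow, inv_div]
    rw [hinv] at h5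
    calc (γ / ρ) ^ n * ‖v‖
        ≤ (γ / ρ) ^ n * (D * ((γ / ρ) ^ n)⁻¹ * ‖(transOp A n 0).mulVec ξ‖) :=
          mul_le_mul_of_nonneg_left h5 (le_of_lt hw)
      _ = ((γ / ρ) ^ n * ((γ / ρ) ^ n)⁻¹) * (D * ‖(transOp A n 0).mulVec ξ‖) := by ring
      _ = D * ‖(transOp A n 0).mulVec ξ‖ := by
          rw [mul_inv_cancel₀ (ne_of_gt hw), one_mul]
  -- the constant
  set c : ℝ := min (‖v‖ / (D * ‖ξ‖)) 1 with hcdef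
  have hc0 : 0 < c := lt_min (by positivity) one_pos
  have hc1 : c ≤ 1 := min_le_right _ _
  have main : ∀ N : ℕ, 1 ≤ N → (γ / ρ) * c ^ ((N : ℝ))⁻¹ ≤ upperBohl A ξ := by
    intro N hN
    have hNR : (0 : ℝ) < (N : ℝ) := by exact_mod_cast Nat.pos_of_ne_zero (by omega)
    apply le_limsup_of_frequently_le _ ⟨max M 1, eventually_map.mpr (f_bounded hA hbd hξ)⟩
    apply tendsto_diag.frequently
    apply Filter.Eventually.frequently
    filter_upwards [eventually_ge_atTop N] with n hn
    have hn1 : 1 ≤ n := le_trans hN hn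
    have hnR : (0 : ℝ) < (n : ℝ) := by exact_mod_cast Nat.pos_of_ne_zero (by omega)
    show (γ / ρ) * c ^ ((N : ℝ))⁻¹ ≤
      (‖(transOp A (n : ℤ) 0).mulVec ξ‖ / ‖(transOp A (0 : ℤ) 0).mulVec ξ‖)
        ^ ((((n : ℤ) - 0 : ℤ) : ℝ))⁻¹
    have hx0 : (transOp A (0 : ℤ) 0).mulVec ξ = ξ := by
      rw [transOp_self hA, Matrix.one_mulVec]
    have hkeyn := hkey (n : ℤ) (by positivity)
    have hw : (0 : ℝ) < (γ / ρ) ^ (n : ℤ) := zpow_pos hγρ _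
    have hrat : (γ / ρ) ^ (n : ℤ) * c ≤ ‖(transOp A (n : ℤ) 0).mulVec ξ‖ / ‖ξ‖ := by
      rw [le_div_iff₀ hxi]
      have hc_le : c ≤ ‖v‖ / (D * ‖ξ‖) := min_le_left _ _
      calc (γ / ρ) ^ (n : ℤ) * c * ‖ξ‖
          ≤ (γ / ρ) ^ (n : ℤ) * (‖v‖ / (D * ‖ξ‖)) * ‖ξ‖ := by
            apply mul_le_mul_of_nonneg_right _ (norm_nonneg _)
            exact mul_le_mul_of_nonneg_left hc_le (le_of_lt hw)
        _ = ((γ / ρ) ^ (n : ℤ) * ‖v‖) / D := by field_simp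
        _ ≤ (D * ‖(transOp A (n : ℤ) 0).mulVec ξ‖) / D := by
            gcongr
        _ = ‖(transOp A (n : ℤ) 0).mulVec ξ‖ := by field_simp
    have hratnn : (0 : ℝ) ≤ (γ / ρ) ^ (n : ℤ) * c := by positivity
    rw [hx0]
    have hsub : (((n : ℤ) - 0 : ℤ) : ℝ) = (n : ℝ) := by push_cast; ring
    rw [hsub]
    calc (γ / ρ) * c ^ ((N : ℝ))⁻¹
        ≤ (γ / ρ) * c ^ ((n : ℝ))⁻¹ := by
          apply mul_le_mul_of_nonneg_left _ (le_of_lt hγρ)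
          apply Real.rpow_le_rpow_of_exponent_ge hc0 hc1
          rw [inv_eq_one_div, inv_eq_one_div]
          exact one_div_le_one_div_of_le hNR (by exact_mod_cast hn)
      _ = ((γ / ρ) ^ (n : ℤ) * c) ^ ((n : ℝ))⁻¹ := by
          rw [Real.mul_rpow (le_of_lt hw) (le_of_lt hc0), ← Real.rpow_intCast (γ / ρ) (n : ℤ),
            ← Real.rpow_mul (le_of_lt hγρ)]
          push_cast
          rw [mul_inv_cancel₀ (ne_of_gt hnR), Real.rpow_one]
      _ ≤ (‖(transOp A (n : ℤ) 0).mulVec ξ‖ / ‖ξ‖) ^ ((n : ℝ))⁻¹ :=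
          Real.rpow_le_rpow hratnn hrat (le_of_lt (inv_pos.mpr hnR))
  have hlim : Tendsto (fun N : ℕ => (γ / ρ) * c ^ ((N : ℝ))⁻¹) atTop (nhds (γ / ρ)) := by
    have := (tendsto_rpow_inv hc0).const_mul (γ / ρ)
    simpa using this
  exact le_of_tendsto hlim ((eventually_ge_atTop 1).mono main)

end BH

namespace BH
variable {d : ℕ} {A : ℤ → Matrix (Fin d) (Fin d) ℝ} {M : ℝ} {ξ : Fin d → ℝ}

lemma mem_spec (hA : ∀ n, IsUnit (A n)) (hbd : ∀ n : ℤ, ‖A n‖ ≤ M ∧ ‖(A n)⁻¹‖ ≤ M)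
    (hξ : ξ ≠ 0) (hpos : 0 < upperBohl A ξ) : upperBohl A ξ ∈ edSpectrum A := by
  refine ⟨hpos, ?_⟩
  rintro ⟨Q, K, ρ, hED⟩
  have hρ0 : 0 < ρ := hED.2.2.1
  have hρ1 : ρ < 1 := hED.2.2.2.1
  by_cases hv : (1 - Q 0).mulVec ξ = 0
  · have him : (Q 0).mulVec ξ = ξ := by
      rw [Matrix.sub_mulVec, Matrix.one_mulVec, sub_eq_zero] at hv
      exact hv.symm
    have h := upperBohl_le_of_im hA hbd hξ hpos hED him
    nlinarith
  · have h := le_upperBohl_of_ker hA hbd hpos hED hv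
    have h2 : upperBohl A ξ < upperBohl A ξ / ρ := by
      rw [lt_div_iff₀ hρ0]; nlinarith
    linarith

end BH


theorem stmt6 {d : ℕ} (A : ℤ → Matrix (Fin d) (Fin d) ℝ)
    (hA : ∀ n, IsUnit (A n)) (M : ℝ)
    (hbd : ∀ n : ℤ, ‖A n‖ ≤ M ∧ ‖(A n)⁻¹‖ ≤ M)
    (a b : ℕ → ℝ) (l : ℕ) (hl : 1 ≤ l)
    (hspec : edSpectrum A = ⋃ j ∈ Finset.Icc 1 l, Set.Icc (a j) (b j))
    (hpos : 0 < a 1) (hab : ∀ j, 1 ≤ j → j ≤ l → a j ≤ b j)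
    (hsep : ∀ j, 1 ≤ j → j < l → b j < a (j + 1))
    (i : ℕ) (hi1 : 1 ≤ i) (hil : i ≤ l) (gp gc : ℝ)
    (hgp : if i = 1 then 0 < gp ∧ gp < a 1 else b (i - 1) < gp ∧ gp < a i)
    (hgc : if i = l then b l < gc else b i < gc ∧ gc < a (i + 1))
    (Pp Pc : ℤ → Matrix (Fin d) (Fin d) ℝ) (Kp rp Kc rc : ℝ)
    (hdp : ExpDichotomy (fun n => gp⁻¹ • A n) Pp Kp rp)
    (hdc : ExpDichotomy (fun n => gc⁻¹ • A n) Pc Kc rc)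
    (ξ : Fin d → ℝ) (hξ : ξ ≠ 0)
    (hker : (Pp 0).mulVec ξ = 0) (him : (Pc 0).mulVec ξ = ξ) :
    upperBohl A ξ ∈ Set.Icc (a i) (b i) := by
  -- monotonicity of interval endpoints
  have step_a : ∀ j, 1 ≤ j → j < l → a j ≤ a (j + 1) := fun j h1 hj =>
    le_trans (hab j h1 (le_of_lt hj)) (le_of_lt (hsep j h1 hj))
  have step_b : ∀ j, 1 ≤ j → j < l → b j ≤ b (j + 1) := fun j h1 hj =>
    le_trans (le_of_lt (hsep j h1 hj)) (hab (j + 1) (by omega) (by omega))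
  have amono : ∀ k, k ≤ l → ∀ j, 1 ≤ j → j ≤ k → a j ≤ a k := by
    intro k
    induction k with
    | zero => intro _ j h1 hj; omega
    | succ k ih =>
      intro hkl j h1 hj
      rcases Nat.lt_or_ge j (k + 1) with h | h
      · have hjk : j ≤ k := by omega
        exact le_trans (ih (by omega) j h1 hjk) (step_a k (by omega) (by omega))
      · have : j = k + 1 := by omega
        subst this; exact le_rfl
  have bmono : ∀ k, k ≤ l → ∀ j, 1 ≤ j → j ≤ k → b j ≤ b k := by
    intro k
    induction k with
    | zero => intro _ j h1 hj; omega
    | succ k ih =>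
      intro hkl j h1 hj
      rcases Nat.lt_or_ge j (k + 1) with h | h
      · have hjk : j ≤ k := by omega
        exact le_trans (ih (by omega) j h1 hjk) (step_b k (by omega) (by omega))
      · have : j = k + 1 := by omega
        subst this; exact le_rfl
  -- positivity of the gap points
  have hgp0 : 0 < gp := by
    by_cases hi : i = 1
    · rw [if_pos hi] at hgp; exact hgp.1
    · rw [if_neg hi] at hgp
      have h1 : a 1 ≤ a (i - 1) := amono (i - 1) (by omega) 1 le_rfl (by omega)
      have h2 : a (i - 1) ≤ b (i - 1) := hab (i - 1) (by omega) (by omega)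
      linarith [hgp.1]
  have hgc0 : 0 < gc := by
    by_cases hi : i = l
    · rw [if_pos hi] at hgc
      have h1 : a 1 ≤ a l := amono l le_rfl 1 le_rfl hl
      have h2 : a l ≤ b l := hab l hl le_rfl
      linarith
    · rw [if_neg hi] at hgc
      have h1 : a 1 ≤ a i := amono i hil 1 le_rfl hi1
      have h2 : a i ≤ b i := hab i hi1 hil
      linarith [hgc.1]
  have hrp0 : 0 < rp := hdp.2.2.1
  have hrp1 : rp < 1 := hdp.2.2.2.1
  have hrc0 : 0 < rc := hdc.2.2.1
  have hrc1 : rc < 1 := hdc.2.2.2.1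
  -- lower bound via the gap below
  have hvp : (1 - Pp 0).mulVec ξ ≠ 0 := by
    rw [Matrix.sub_mulVec, Matrix.one_mulVec, hker, sub_zero]
    exact hξ
  have hlow : gp / rp ≤ upperBohl A ξ := BH.le_upperBohl_of_ker hA hbd hgp0 hdp hvp
  have hgpβ : gp < upperBohl A ξ := by
    have : gp < gp / rp := by rw [lt_div_iff₀ hrp0]; nlinarith
    linarith
  -- upper bound via the gap above
  have hupp : upperBohl A ξ ≤ gc * rc := BH.upperBohl_le_of_im hA hbd hξ hgc0 hdc him
  have hβgc : upperBohl A ξ < gc := by nlinarith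
  have hβ0 : 0 < upperBohl A ξ := lt_trans hgp0 hgpβ
  -- the Bohl exponent is in the spectrum
  have hmem := BH.mem_spec hA hbd hξ hβ0
  rw [hspec] at hmem
  simp only [Set.mem_iUnion, Finset.mem_Icc] at hmem
  obtain ⟨j, ⟨hj1, hjl⟩, hja, hjb⟩ := hmem
  have hji : j = i := by
    by_contra hne
    rcases lt_or_gt_of_ne hne with hlt | hgt
    · have hi2 : i ≠ 1 := by omega
      rw [if_neg hi2] at hgp
      have hbb : b j ≤ b (i - 1) := bmono (i - 1) (by omega) j hj1 (by omega)
      linarith [hgp.1]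
    · have hil' : i ≠ l := by omega
      rw [if_neg hil'] at hgc
      have haa : a (i + 1) ≤ a j := amono j hjl (i + 1) (by omega) (by omega)
      linarith [hgc.2]
  subst hji
  exact ⟨hja, hjb⟩
end

section
/- Under the same hypotheses, for any ξ ∈ W_i(0) \ {0} the lower Bohl exponent satisfies β̲_A(ξ) ∈ [a_i, b_i], and consequently [β̲_A(ξ), β̄_A(ξ)] ⊆ [a_i, b_i]. -/
open Filter

attribute [local instance] Matrix.linftyOpNormedRing Matrix.linftyOpNormedAlgebra

namespace BohlAux
variable {d : ℕ} {A : ℤ → Matrix (Fin d) (Fin d) ℝ}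

lemma mul_inv_self (hA : ∀ n, IsUnit (A n)) (n : ℤ) : A n * (A n)⁻¹ = 1 :=
  Matrix.mul_nonsing_inv _ ((Matrix.isUnit_iff_isUnit_det _).mp (hA n))

lemma inv_mul_self (hA : ∀ n, IsUnit (A n)) (n : ℤ) : (A n)⁻¹ * A n = 1 :=
  Matrix.nonsing_inv_mul _ ((Matrix.isUnit_iff_isUnit_det _).mp (hA n))

lemma listCoe {α β : Type} (f : α → β) (l : List α) : l.flatMap (fun a => [f a]) = l.map f := by
  induction l with
  | nil => rfl
  | cons x xs ih => rw [List.flatMap_cons, ih, List.singleton_append, List.map_cons]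

lemma Phi_ofNat (A : ℤ → Matrix (Fin d) (Fin d) ℝ) (n : ℕ) :
    Phi A (Int.ofNat n) = ((List.range n).map (fun j : ℕ => A ((n:ℤ) - 1 - (j:ℤ)))).prod := by
  simp only [Phi]
  congr 1
  have h : (do let a ← List.range n; pure ((a : ℤ)))
      = List.map (fun a : ℕ => (a:ℤ)) (List.range n) := listCoe _ _
  rw [h, List.map_map]; rfl

lemma Phi_negSucc (A : ℤ → Matrix (Fin d) (Fin d) ℝ) (n : ℕ) :
    Phi A (Int.negSucc n)
      = ((List.range (n+1)).map (fun j : ℕ => (A (Int.negSucc n + (j:ℤ)))⁻¹)).prod := by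
  simp only [Phi]
  congr 1
  have h : (do let a ← List.range (n+1); pure ((a : ℤ)))
      = List.map (fun a : ℕ => (a:ℤ)) (List.range (n+1)) := listCoe _ _
  rw [h, List.map_map]; rfl

lemma prodRange_succ_left {M : Type*} [Monoid M] (f : ℕ → M) (n : ℕ) :
    ((List.range (n+1)).map f).prod = f 0 * ((List.range n).map (fun j => f (j+1))).prod := by
  rw [List.range_succ_eq_map, List.map_cons, List.prod_cons, List.map_map]
  rfl

lemma Phi_zero (A : ℤ → Matrix (Fin d) (Fin d) ℝ) : Phi A 0 = 1 := by
  show Phi A (Int.ofNat 0) = 1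
  rw [Phi_ofNat]
  simp

lemma Phi_succ (hA : ∀ n, IsUnit (A n)) (n : ℤ) : Phi A (n + 1) = A n * Phi A n := by
  cases n with
  | ofNat k =>
      show Phi A (Int.ofNat (k+1)) = A (Int.ofNat k) * Phi A (Int.ofNat k)
      rw [Phi_ofNat, Phi_ofNat, prodRange_succ_left]
      congr 1
      · rw [show ((k+1:ℕ):ℤ) - 1 - ((0:ℕ):ℤ) = Int.ofNat k by rw [Int.ofNat_eq_coe]; push_cast; ring]
      · congr 1
        apply List.map_congr_left
        intro j _
        congr 1; push_cast; ring
  | negSucc k =>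
      cases k with
      | zero =>
          show Phi A (0 : ℤ) = A (Int.negSucc 0) * Phi A (Int.negSucc 0)
          rw [Phi_zero, Phi_negSucc]
          rw [show List.range 1 = [0] from rfl, List.map_singleton, List.prod_singleton,
            show Int.negSucc 0 + ((0:ℕ):ℤ) = Int.negSucc 0 by simp, mul_inv_self hA]
      | succ m =>
          show Phi A (Int.negSucc m) = A (Int.negSucc (m+1)) * Phi A (Int.negSucc (m+1))
          rw [Phi_negSucc, Phi_negSucc]
          conv_rhs => rw [prodRange_succ_left]
          rw [show Int.negSucc (m+1) + ((0:ℕ):ℤ) = Int.negSucc (m+1) by simp,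
            Matrix.mul_nonsing_inv_cancel_left _ _ ((Matrix.isUnit_iff_isUnit_det _).mp (hA _))]
          congr 1
          apply List.map_congr_left
          intro j _
          congr 2
          simp only [Int.negSucc_eq]
          push_cast; ring

lemma Phi_isUnit (hA : ∀ n, IsUnit (A n)) (n : ℤ) : IsUnit (Phi A n) := by
  induction n using Int.induction_on with
  | zero => rw [Phi_zero]; exact isUnit_one
  | succ k ih => rw [Phi_succ hA]; exact (hA _).mul ih
  | pred k ih =>
      have h := Phi_succ hA (-(k+1) : ℤ)
      rw [show (-(k+1) : ℤ) + 1 = -k by ring] at h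
      have h3 : Phi A (-(k+1) : ℤ) = (A (-(k+1):ℤ))⁻¹ * Phi A (-k : ℤ) := by
        rw [h, ← mul_assoc, inv_mul_self hA, one_mul]
      rw [show (-(k:ℤ) - 1) = -((k:ℤ)+1) by ring, h3]
      exact ((Matrix.isUnit_iff_isUnit_det _).mpr
        (Matrix.isUnit_nonsing_inv_det _ ((Matrix.isUnit_iff_isUnit_det _).mp (hA _)))).mul ih

lemma Phi_mul_inv (hA : ∀ n, IsUnit (A n)) (n : ℤ) : Phi A n * (Phi A n)⁻¹ = 1 :=
  Matrix.mul_nonsing_inv _ ((Matrix.isUnit_iff_isUnit_det _).mp (Phi_isUnit hA n))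

lemma Phi_inv_mul (hA : ∀ n, IsUnit (A n)) (n : ℤ) : (Phi A n)⁻¹ * Phi A n = 1 :=
  Matrix.nonsing_inv_mul _ ((Matrix.isUnit_iff_isUnit_det _).mp (Phi_isUnit hA n))

lemma transOp_cocycle (hA : ∀ n, IsUnit (A n)) (m n k : ℤ) :
    transOp A m n * transOp A n k = transOp A m k := by
  unfold transOp
  rw [mul_assoc, ← mul_assoc (Phi A n)⁻¹, Phi_inv_mul hA, one_mul]

lemma transOp_self (hA : ∀ n, IsUnit (A n)) (n : ℤ) : transOp A n n = 1 :=
  Phi_mul_inv hA n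

lemma transOp_zero (A : ℤ → Matrix (Fin d) (Fin d) ℝ) (n : ℤ) : transOp A n 0 = Phi A n := by
  unfold transOp
  rw [Phi_zero, show (1 : Matrix (Fin d) (Fin d) ℝ)⁻¹ = 1 from Matrix.inv_eq_right_inv (one_mul 1), mul_one]

lemma transOp_isUnit (hA : ∀ n, IsUnit (A n)) (m n : ℤ) : IsUnit (transOp A m n) :=
  (Phi_isUnit hA m).mul ((Matrix.isUnit_iff_isUnit_det _).mpr
    (Matrix.isUnit_nonsing_inv_det _ ((Matrix.isUnit_iff_isUnit_det _).mp (Phi_isUnit hA n))))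

section Invariance
variable {P : ℤ → Matrix (Fin d) (Fin d) ℝ}

lemma proj_Phi (hA : ∀ n, IsUnit (A n)) (hC : ∀ k, P (k+1) * A k = A k * P k) :
    ∀ n : ℤ, P n * Phi A n = Phi A n * P 0 := by
  intro n
  induction n using Int.induction_on with
  | zero => rw [Phi_zero, one_mul, mul_one]
  | succ k ih =>
      rw [Phi_succ hA, ← mul_assoc, hC, mul_assoc, ih, ← mul_assoc]
  | pred k ih =>
      have key : A (-(k:ℤ)-1) * (P (-(k:ℤ)-1) * Phi A (-(k:ℤ)-1))
          = A (-(k:ℤ)-1) * (Phi A (-(k:ℤ)-1) * P 0) := by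
        have h1 : Phi A (-(k:ℤ)) = A (-(k:ℤ)-1) * Phi A (-(k:ℤ)-1) := by
          have := Phi_succ hA (-(k:ℤ)-1)
          rw [show (-(k:ℤ)-1) + 1 = -k by ring] at this
          exact this
        have h2 := hC (-(k:ℤ)-1)
        rw [show (-(k:ℤ)-1) + 1 = -k by ring] at h2
        calc A (-(k:ℤ)-1) * (P (-(k:ℤ)-1) * Phi A (-(k:ℤ)-1))
            = (A (-(k:ℤ)-1) * P (-(k:ℤ)-1)) * Phi A (-(k:ℤ)-1) := by rw [mul_assoc]
          _ = (P (-(k:ℤ)) * A (-(k:ℤ)-1)) * Phi A (-(k:ℤ)-1) := by rw [h2]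
          _ = P (-(k:ℤ)) * Phi A (-(k:ℤ)) := by rw [mul_assoc, ← h1]
          _ = Phi A (-(k:ℤ)) * P 0 := ih
          _ = A (-(k:ℤ)-1) * (Phi A (-(k:ℤ)-1) * P 0) := by rw [h1, mul_assoc]
      exact (hA _).mul_left_cancel key

lemma proj_transOp (hA : ∀ n, IsUnit (A n)) (hC : ∀ k, P (k+1) * A k = A k * P k)
    (k l : ℤ) : P k * transOp A k l = transOp A k l * P l := by
  have hl := proj_Phi hA hC l
  have hinv : (Phi A l)⁻¹ * P l = P 0 * (Phi A l)⁻¹ := by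
    calc (Phi A l)⁻¹ * P l = (Phi A l)⁻¹ * ((P l * Phi A l) * (Phi A l)⁻¹) := by
          rw [mul_assoc, Phi_mul_inv hA, mul_one]
      _ = (Phi A l)⁻¹ * (Phi A l * P 0 * (Phi A l)⁻¹) := by rw [hl]
      _ = P 0 * (Phi A l)⁻¹ := by
          rw [← mul_assoc, ← mul_assoc, Phi_inv_mul hA, one_mul]
  unfold transOp
  calc P k * (Phi A k * (Phi A l)⁻¹) = (P k * Phi A k) * (Phi A l)⁻¹ := by rw [mul_assoc]
    _ = Phi A k * (P 0 * (Phi A l)⁻¹) := by rw [proj_Phi hA hC k, mul_assoc]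
    _ = Phi A k * ((Phi A l)⁻¹ * P l) := by rw [hinv]
    _ = Phi A k * (Phi A l)⁻¹ * P l := by rw [mul_assoc]

end Invariance

section Scaling
variable {γ : ℝ}

lemma smul_isUnit (hA : ∀ n, IsUnit (A n)) (hγ : γ ≠ 0) (n : ℤ) :
    IsUnit (γ⁻¹ • A n) := by
  rw [Matrix.isUnit_iff_isUnit_det, Matrix.det_smul, isUnit_iff_ne_zero]
  exact mul_ne_zero (pow_ne_zero _ (inv_ne_zero hγ))
    (((Matrix.isUnit_iff_isUnit_det _).mp (hA n)).ne_zero)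

lemma Phi_smul (hA : ∀ n, IsUnit (A n)) (hγ : γ ≠ 0) (n : ℤ) :
    Phi (fun m => γ⁻¹ • A m) n = (γ ^ n)⁻¹ • Phi A n := by
  have hA' : ∀ m, IsUnit ((fun m => γ⁻¹ • A m) m) := fun m => smul_isUnit hA hγ m
  induction n using Int.induction_on with
  | zero => rw [Phi_zero, Phi_zero]; simp
  | succ k ih =>
      rw [Phi_succ hA', Phi_succ hA, ih, Matrix.smul_mul, Matrix.mul_smul, smul_smul]
      congr 1
      rw [← zpow_neg, ← zpow_neg, ← zpow_neg_one γ, ← zpow_add₀ hγ]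
      congr 1
      ring
  | pred k ih =>
      have hstep' := Phi_succ hA' (-(k:ℤ)-1)
      rw [show (-(k:ℤ)-1) + 1 = -k by ring] at hstep'
      have hstep := Phi_succ hA (-(k:ℤ)-1)
      rw [show (-(k:ℤ)-1) + 1 = -k by ring] at hstep
      have key : (γ⁻¹ • A (-(k:ℤ)-1)) * Phi (fun m => γ⁻¹ • A m) (-(k:ℤ)-1)
          = (γ⁻¹ • A (-(k:ℤ)-1)) * ((γ ^ (-(k:ℤ)-1))⁻¹ • Phi A (-(k:ℤ)-1)) := by
        rw [← hstep', ih, Matrix.smul_mul, Matrix.mul_smul, ← hstep, smul_smul]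
        congr 1
        rw [← zpow_neg, ← zpow_neg, ← zpow_neg_one γ, ← zpow_add₀ hγ]
        congr 1
        ring
      exact (hA' _).mul_left_cancel key

lemma transOp_smul (hA : ∀ n, IsUnit (A n)) (hγ : γ ≠ 0) (m n : ℤ) :
    transOp (fun k => γ⁻¹ • A k) m n = γ ^ (n - m) • transOp A m n := by
  have hinv : (Phi (fun k => γ⁻¹ • A k) n)⁻¹ = γ ^ n • (Phi A n)⁻¹ := by
    apply Matrix.inv_eq_right_inv
    rw [Phi_smul hA hγ, Matrix.smul_mul, Matrix.mul_smul, smul_smul,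
      inv_mul_cancel₀ (zpow_ne_zero _ hγ), one_smul, Phi_mul_inv hA]
  unfold transOp
  rw [Phi_smul hA hγ, hinv, Matrix.smul_mul, Matrix.mul_smul, smul_smul]
  congr 1
  rw [← zpow_neg, ← zpow_add₀ hγ]
  congr 1
  ring

end Scaling

section Dicho

variable {P : ℤ → Matrix (Fin d) (Fin d) ℝ} {K ρ γ : ℝ}

/-- Statement of exponential dichotomy (duplicated from problem file shape). -/
def EDS (A P : ℤ → Matrix (Fin d) (Fin d) ℝ) (K ρ : ℝ) : Prop :=
  (∀ k : ℤ, P k * P k = P k ∧ P (k + 1) * A k = A k * P k) ∧ 0 < K ∧ 0 < ρ ∧ ρ < 1 ∧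
    (∀ k l : ℤ, l ≤ k → ‖transOp A k l * P l‖ ≤ K * ρ ^ (k - l)) ∧
    (∀ k l : ℤ, k ≤ l → ‖transOp A k l * (1 - P l)‖ ≤ K * ρ ^ (l - k))

lemma aux_div {c x y : ℝ} (hc : 0 < c) (h : c * x ≤ y) : x ≤ c⁻¹ * y := by
  have h2 := mul_le_mul_of_nonneg_left h (le_of_lt (inv_pos.mpr hc))
  rwa [← mul_assoc, inv_mul_cancel₀ hc.ne', one_mul] at h2

lemma zpow_negflip (hγ : 0 < γ) (m n : ℤ) : (γ ^ (m - n))⁻¹ = γ ^ (n - m) := by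
  rw [← zpow_neg]; congr 1; ring

lemma eds_comm (hd : EDS (fun n => γ⁻¹ • A n) P K ρ) (hγ : 0 < γ) (k : ℤ) :
    P (k+1) * A k = A k * P k := by
  have h := (hd.1 k).2
  simp only [Matrix.mul_smul, Matrix.smul_mul] at h
  exact smul_right_injective _ (inv_ne_zero hγ.ne') h

lemma eds_estS (hA : ∀ n, IsUnit (A n)) (hd : EDS (fun n => γ⁻¹ • A n) P K ρ) (hγ : 0 < γ)
    {k l : ℤ} (h : l ≤ k) :
    ‖transOp A k l * P l‖ ≤ K * ρ ^ (k - l) * γ ^ (k - l) := by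
  have h1 := hd.2.2.2.2.1 k l h
  rw [transOp_smul hA hγ.ne', Matrix.smul_mul, norm_smul, Real.norm_eq_abs,
    abs_of_pos (zpow_pos hγ _)] at h1
  have h3 := aux_div (zpow_pos hγ (l-k)) h1
  rw [zpow_negflip hγ] at h3
  calc ‖transOp A k l * P l‖ ≤ γ ^ (k-l) * (K * ρ ^ (k-l)) := h3
    _ = K * ρ ^ (k - l) * γ ^ (k - l) := by ring

lemma eds_estU (hA : ∀ n, IsUnit (A n)) (hd : EDS (fun n => γ⁻¹ • A n) P K ρ) (hγ : 0 < γ)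
    {k l : ℤ} (h : k ≤ l) :
    ‖transOp A k l * (1 - P l)‖ ≤ K * ρ ^ (l - k) * γ ^ (k - l) := by
  have h1 := hd.2.2.2.2.2 k l h
  rw [transOp_smul hA hγ.ne', Matrix.smul_mul, norm_smul, Real.norm_eq_abs,
    abs_of_pos (zpow_pos hγ _)] at h1
  have h3 := aux_div (zpow_pos hγ (l-k)) h1
  rw [zpow_negflip hγ] at h3
  calc ‖transOp A k l * (1 - P l)‖ ≤ γ ^ (k-l) * (K * ρ ^ (l-k)) := h3
    _ = K * ρ ^ (l - k) * γ ^ (k - l) := by ring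

lemma sol_shift (hA : ∀ n, IsUnit (A n)) (ξ : Fin d → ℝ) (m n : ℤ) :
    (transOp A n m).mulVec ((transOp A m 0).mulVec ξ) = (transOp A n 0).mulVec ξ := by
  rw [Matrix.mulVec_mulVec, transOp_cocycle hA]

lemma sol_pos (hA : ∀ n, IsUnit (A n)) {ξ : Fin d → ℝ} (hξ : ξ ≠ 0) (m : ℤ) :
    0 < ‖(transOp A m 0).mulVec ξ‖ := by
  rw [norm_pos_iff]
  intro h0
  apply hξ
  have h2 := congrArg ((transOp A 0 m).mulVec) h0
  rw [sol_shift hA, transOp_self hA, Matrix.one_mulVec, Matrix.mulVec_zero] at h2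
  exact h2

lemma sol_proj (hA : ∀ n, IsUnit (A n)) (hd : EDS (fun n => γ⁻¹ • A n) P K ρ) (hγ : 0 < γ)
    (ξ : Fin d → ℝ) (m : ℤ) :
    (P m).mulVec ((transOp A m 0).mulVec ξ) = (transOp A m 0).mulVec ((P 0).mulVec ξ) := by
  rw [Matrix.mulVec_mulVec, Matrix.mulVec_mulVec,
    proj_transOp hA (eds_comm hd hγ) m 0]

/-- Stable estimate along the solution, for `ξ` in the range of `P 0`. -/
lemma stable_bound (hA : ∀ n, IsUnit (A n)) (hd : EDS (fun n => γ⁻¹ • A n) P K ρ)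
    (hγ : 0 < γ) {ξ : Fin d → ℝ} (hP : (P 0).mulVec ξ = ξ) {m n : ℤ} (h : m ≤ n) :
    ‖(transOp A n 0).mulVec ξ‖
      ≤ K * ρ ^ (n - m) * γ ^ (n - m) * ‖(transOp A m 0).mulVec ξ‖ := by
  have hm : (P m).mulVec ((transOp A m 0).mulVec ξ) = (transOp A m 0).mulVec ξ := by
    rw [sol_proj hA hd hγ, hP]
  have key : (transOp A n 0).mulVec ξ
      = (transOp A n m * P m).mulVec ((transOp A m 0).mulVec ξ) := by
    rw [← Matrix.mulVec_mulVec, hm, sol_shift hA]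
  rw [key]
  calc ‖(transOp A n m * P m).mulVec ((transOp A m 0).mulVec ξ)‖
      ≤ ‖transOp A n m * P m‖ * ‖(transOp A m 0).mulVec ξ‖ :=
        Matrix.linfty_opNorm_mulVec _ _
    _ ≤ K * ρ ^ (n - m) * γ ^ (n - m) * ‖(transOp A m 0).mulVec ξ‖ :=
        mul_le_mul_of_nonneg_right (eds_estS hA hd hγ h) (norm_nonneg _)

/-- Unstable estimate along the solution, for `ξ` in the kernel of `P 0`. -/
lemma unstable_bound (hA : ∀ n, IsUnit (A n)) (hd : EDS (fun n => γ⁻¹ • A n) P K ρ)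
    (hγ : 0 < γ) {ξ : Fin d → ℝ} (hP : (P 0).mulVec ξ = 0) {m n : ℤ} (h : m ≤ n) :
    ‖(transOp A m 0).mulVec ξ‖
      ≤ K * ρ ^ (n - m) * γ ^ (m - n) * ‖(transOp A n 0).mulVec ξ‖ := by
  have hn : (1 - P n).mulVec ((transOp A n 0).mulVec ξ) = (transOp A n 0).mulVec ξ := by
    rw [Matrix.sub_mulVec, sol_proj hA hd hγ, hP, Matrix.mulVec_zero, Matrix.one_mulVec, sub_zero]
  have key : (transOp A m 0).mulVec ξ
      = (transOp A m n * (1 - P n)).mulVec ((transOp A n 0).mulVec ξ) := by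
    rw [← Matrix.mulVec_mulVec, hn, sol_shift hA]
  rw [key]
  calc ‖(transOp A m n * (1 - P n)).mulVec ((transOp A n 0).mulVec ξ)‖
      ≤ ‖transOp A m n * (1 - P n)‖ * ‖(transOp A n 0).mulVec ξ‖ :=
        Matrix.linfty_opNorm_mulVec _ _
    _ ≤ K * ρ ^ (n - m) * γ ^ (m - n) * ‖(transOp A n 0).mulVec ξ‖ :=
        mul_le_mul_of_nonneg_right (eds_estU hA hd hγ h) (norm_nonneg _)

/-- Lower estimate forward in time for vectors in the kernel of `P 0`. -/
lemma unstable_lower (hA : ∀ n, IsUnit (A n)) (hd : EDS (fun n => γ⁻¹ • A n) P K ρ)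
    (hγ : 0 < γ) {ξ : Fin d → ℝ} (hP : (P 0).mulVec ξ = 0) {m n : ℤ} (h : m ≤ n) :
    γ ^ (n - m) * ‖(transOp A m 0).mulVec ξ‖
      ≤ K * ρ ^ (n - m) * ‖(transOp A n 0).mulVec ξ‖ := by
  have h1 := unstable_bound hA hd hγ hP h
  have h2 := mul_le_mul_of_nonneg_left h1 (le_of_lt (zpow_pos hγ (n-m)))
  calc γ ^ (n-m) * ‖(transOp A m 0).mulVec ξ‖
      ≤ γ ^ (n-m) * (K * ρ ^ (n - m) * γ ^ (m - n) * ‖(transOp A n 0).mulVec ξ‖) := h2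
    _ = (γ ^ (n-m) * γ ^ (m-n)) * (K * ρ ^ (n-m) * ‖(transOp A n 0).mulVec ξ‖) := by ring
    _ = K * ρ ^ (n-m) * ‖(transOp A n 0).mulVec ξ‖ := by
        rw [← zpow_add₀ hγ.ne']
        norm_num

end Dicho

section Charact

variable {P : ℤ → Matrix (Fin d) (Fin d) ℝ} {K ρ γ : ℝ}

/-- Forward boundedness at rate `t`. -/
def FwdB (A : ℤ → Matrix (Fin d) (Fin d) ℝ) (t : ℝ) (η : Fin d → ℝ) : Prop :=
  ∃ C : ℝ, ∀ n : ℤ, 0 ≤ n → ‖(transOp A n 0).mulVec η‖ ≤ C * t ^ n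

/-- Backward boundedness at rate `t`. -/
def BwdB (A : ℤ → Matrix (Fin d) (Fin d) ℝ) (t : ℝ) (η : Fin d → ℝ) : Prop :=
  ∃ C : ℝ, ∀ n : ℤ, n ≤ 0 → ‖(transOp A n 0).mulVec η‖ ≤ C * t ^ n

lemma FwdB_mono {t t' : ℝ} (ht : 0 < t) (htt' : t ≤ t') {η : Fin d → ℝ}
    (h : FwdB A t η) : FwdB A t' η := by
  obtain ⟨C, hC⟩ := h
  have hC0 : 0 ≤ C := by
    have := hC 0 le_rfl
    simpa using le_trans (norm_nonneg _) this
  refine ⟨C, fun n hn => ?_⟩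
  refine le_trans (hC n hn) (mul_le_mul_of_nonneg_left ?_ hC0)
  obtain ⟨k, rfl⟩ : ∃ k : ℕ, n = (k:ℤ) := ⟨n.toNat, (Int.toNat_of_nonneg hn).symm⟩
  rw [zpow_natCast, zpow_natCast]
  exact pow_le_pow_left₀ ht.le htt' k

lemma BwdB_anti {t t' : ℝ} (ht' : 0 < t') (htt' : t' ≤ t) {η : Fin d → ℝ}
    (h : BwdB A t η) : BwdB A t' η := by
  obtain ⟨C, hC⟩ := h
  have hC0 : 0 ≤ C := by
    have := hC 0 le_rfl
    simpa using le_trans (norm_nonneg _) this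
  refine ⟨C, fun n hn => ?_⟩
  refine le_trans (hC n hn) (mul_le_mul_of_nonneg_left ?_ hC0)
  obtain ⟨k, rfl⟩ : ∃ k : ℕ, n = -(k:ℤ) := ⟨(-n).toNat, by omega⟩
  rw [zpow_neg, zpow_neg, zpow_natCast, zpow_natCast]
  exact one_div_le_one_div_of_le (pow_pos ht' k) (pow_le_pow_left₀ ht'.le htt' k) |>.trans_eq
    (one_div _) |>.trans_eq' (one_div _)

lemma stable_mem_FwdB (hA : ∀ n, IsUnit (A n)) (hd : EDS (fun n => γ⁻¹ • A n) P K ρ)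
    (hγ : 0 < γ) {η : Fin d → ℝ} (hP : (P 0).mulVec η = η) : FwdB A (γ * ρ) η := by
  refine ⟨K * ‖η‖, fun n hn => ?_⟩
  have h1 := stable_bound hA hd hγ hP (m := 0) (n := n) hn
  rw [transOp_self hA, Matrix.one_mulVec, sub_zero] at h1
  calc ‖(transOp A n 0).mulVec η‖ ≤ K * ρ ^ n * γ ^ n * ‖η‖ := h1
    _ = K * ‖η‖ * (γ * ρ) ^ n := by rw [mul_zpow]; ring

lemma unstable_mem_BwdB (hA : ∀ n, IsUnit (A n)) (hd : EDS (fun n => γ⁻¹ • A n) P K ρ)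
    (hγ : 0 < γ) {η : Fin d → ℝ} (hP : (P 0).mulVec η = 0) : BwdB A (γ / ρ) η := by
  refine ⟨K * ‖η‖, fun n hn => ?_⟩
  have h1 := unstable_bound hA hd hγ hP (m := n) (n := 0) hn
  rw [transOp_self hA, Matrix.one_mulVec, sub_zero, zero_sub] at h1
  have hρ := hd.2.2.1
  calc ‖(transOp A n 0).mulVec η‖ ≤ K * ρ ^ (-n) * γ ^ n * ‖η‖ := h1
    _ = K * ‖η‖ * (γ / ρ) ^ n := by
        rw [div_zpow, zpow_neg]
        field_simp

lemma not_FwdB (hA : ∀ n, IsUnit (A n)) (hd : EDS (fun n => γ⁻¹ • A n) P K ρ)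
    (hγ : 0 < γ) {η : Fin d → ℝ} (hq : η - (P 0).mulVec η ≠ 0)
    {t : ℝ} (ht : 0 < t) (htlt : t < γ / ρ) : ¬ FwdB A t η := by
  rintro ⟨C, hC⟩
  have hK := hd.2.1
  have hρ := hd.2.2.1
  have hρ1 := hd.2.2.2.1
  set q := η - (P 0).mulVec η with hq_def
  set s := (P 0).mulVec η with hs_def
  have hC0 : 0 ≤ C := by
    have := hC 0 le_rfl
    simpa using le_trans (norm_nonneg _) this
  have hPq : (P 0).mulVec q = 0 := by
    rw [hq_def, Matrix.mulVec_sub, Matrix.mulVec_mulVec, (hd.1 0).1, sub_self]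
  have hPs : (P 0).mulVec s = s := by
    rw [hs_def, Matrix.mulVec_mulVec, (hd.1 0).1]
  set r : ℝ := max (ρ * t / γ) (ρ * ρ) with hr_def
  have hr0 : 0 ≤ r := le_trans (by positivity) (le_max_right _ _)
  have hr1 : r < 1 := by
    apply max_lt
    · rw [div_lt_one hγ]
      calc ρ * t < ρ * (γ / ρ) := by
            exact mul_lt_mul_of_pos_left htlt hρ
        _ = γ := by field_simp
    · nlinarith
  set D : ℝ := K * C + K * K * ‖s‖ + 1 with hD_def
  have hD0 : 0 < D := by positivity
  have hqn : 0 < ‖q‖ := norm_pos_iff.mpr hq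
  obtain ⟨n, hn⟩ := exists_pow_lt_of_lt_one (div_pos hqn hD0) hr1
  -- estimates at time n
  have e1 := unstable_lower hA hd hγ hPq (m := 0) (n := (n:ℤ)) (by positivity)
  rw [transOp_self hA, Matrix.one_mulVec, sub_zero] at e1
  have e2 := stable_bound hA hd hγ hPs (m := 0) (n := (n:ℤ)) (by positivity)
  rw [transOp_self hA, Matrix.one_mulVec, sub_zero] at e2
  have e3 := hC (n:ℤ) (by positivity)
  rw [zpow_natCast] at e1 e2 e3
  have esplit : ‖(transOp A (n:ℤ) 0).mulVec q‖
      ≤ ‖(transOp A (n:ℤ) 0).mulVec η‖ + ‖(transOp A (n:ℤ) 0).mulVec s‖ := by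
    rw [hq_def, Matrix.mulVec_sub]
    exact norm_sub_le _ _
  -- combine
  have key : γ ^ n * ‖q‖ ≤ D * r ^ n * γ ^ n := by
    have h4 : γ ^ n * ‖q‖ ≤ K * ρ ^ n * (C * t ^ n + K * ρ ^ n * γ ^ n * ‖s‖) := by
      calc γ ^ n * ‖q‖ ≤ K * ρ ^ n * ‖(transOp A (n:ℤ) 0).mulVec q‖ := e1
        _ ≤ K * ρ ^ n * (C * t ^ n + K * ρ ^ n * γ ^ n * ‖s‖) := by
            apply mul_le_mul_of_nonneg_left _ (by positivity)
            exact le_trans esplit (add_le_add e3 e2)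
    have h5 : ρ ^ n * t ^ n ≤ r ^ n * γ ^ n := by
      have : ρ * t ≤ r * γ := by
        have := le_max_left (ρ * t / γ) (ρ * ρ)
        calc ρ * t = (ρ * t / γ) * γ := by field_simp
          _ ≤ r * γ := mul_le_mul_of_nonneg_right this hγ.le
      calc ρ ^ n * t ^ n = (ρ * t) ^ n := (mul_pow _ _ _).symm
        _ ≤ (r * γ) ^ n := pow_le_pow_left₀ (by positivity) this n
        _ = r ^ n * γ ^ n := mul_pow _ _ _
    have h6 : ρ ^ n * ρ ^ n ≤ r ^ n := by
      calc ρ ^ n * ρ ^ n = (ρ * ρ) ^ n := (mul_pow _ _ _).symm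
        _ ≤ r ^ n := pow_le_pow_left₀ (by positivity) (le_max_right _ _) n
    calc γ ^ n * ‖q‖ ≤ K * ρ ^ n * (C * t ^ n + K * ρ ^ n * γ ^ n * ‖s‖) := h4
      _ = K * C * (ρ ^ n * t ^ n) + K * K * ‖s‖ * (ρ ^ n * ρ ^ n) * γ ^ n := by ring
      _ ≤ K * C * (r ^ n * γ ^ n) + K * K * ‖s‖ * r ^ n * γ ^ n := by
          apply add_le_add
          · exact mul_le_mul_of_nonneg_left h5 (by positivity)
          · apply mul_le_mul_of_nonneg_right _ (by positivity)
            exact mul_le_mul_of_nonneg_left h6 (by positivity)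
      _ = (K * C + K * K * ‖s‖) * r ^ n * γ ^ n := by ring
      _ ≤ D * r ^ n * γ ^ n := by
          apply mul_le_mul_of_nonneg_right _ (by positivity)
          apply mul_le_mul_of_nonneg_right _ (by positivity)
          rw [hD_def]; linarith
  have key2 : ‖q‖ ≤ D * r ^ n := by
    have hγn : (0:ℝ) < γ ^ n := by positivity
    have := key
    rw [mul_comm (γ ^ n) ‖q‖] at this
    exact le_of_mul_le_mul_right (by rw [mul_comm (D * r ^ n) (γ ^ n)] at this ⊢; linarith) hγn
  have hfin : D * r ^ n < ‖q‖ := by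
    have := (lt_div_iff₀' hD0).mp hn
    linarith [this]
  linarith

lemma not_BwdB (hA : ∀ n, IsUnit (A n)) (hd : EDS (fun n => γ⁻¹ • A n) P K ρ)
    (hγ : 0 < γ) {η : Fin d → ℝ} (hs : (P 0).mulVec η ≠ 0)
    {t : ℝ} (ht : γ * ρ < t) : ¬ BwdB A t η := by
  rintro ⟨C, hC⟩
  have hK := hd.2.1
  have hρ := hd.2.2.1
  have hρ1 := hd.2.2.2.1
  have ht0 : 0 < t := lt_trans (by positivity) ht
  set s := (P 0).mulVec η with hs_def
  set u := η - s with hu_def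
  have hC0 : 0 ≤ C := by
    have := hC 0 le_rfl
    simpa using le_trans (norm_nonneg _) this
  have hPu : (P 0).mulVec u = 0 := by
    rw [hu_def, Matrix.mulVec_sub, hs_def, Matrix.mulVec_mulVec, (hd.1 0).1, sub_self]
  have hPs : (P 0).mulVec s = s := by
    rw [hs_def, Matrix.mulVec_mulVec, (hd.1 0).1]
  set r : ℝ := max (ρ * γ / t) (ρ * ρ) with hr_def
  have hr0 : 0 ≤ r := le_trans (by positivity) (le_max_right _ _)
  have hr1 : r < 1 := by
    apply max_lt
    · rw [div_lt_one ht0]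
      linarith [ht]
    · nlinarith
  set D : ℝ := K * C + K * K * ‖u‖ + 1 with hD_def
  have hD0 : 0 < D := by positivity
  have hsn : 0 < ‖s‖ := norm_pos_iff.mpr hs
  obtain ⟨k, hk⟩ := exists_pow_lt_of_lt_one (div_pos hsn hD0) hr1
  -- estimates at time n = -k
  have hk0 : (-(k:ℤ) ≤ 0) := neg_nonpos.mpr (Int.natCast_nonneg k)
  have e1 := stable_bound hA hd hγ hPs (m := -(k:ℤ)) (n := 0) hk0
  rw [transOp_self hA, Matrix.one_mulVec] at e1
  simp only [zero_sub, sub_zero, neg_neg] at e1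
  have e2 := unstable_bound hA hd hγ hPu (m := -(k:ℤ)) (n := 0) hk0
  rw [transOp_self hA, Matrix.one_mulVec] at e2
  simp only [zero_sub, sub_zero, neg_neg] at e2
  -- e2 : ‖x_u (-k)‖ ≤ K * ρ ^ (k:ℤ) * γ ^ (-(k:ℤ)) * ‖u‖
  have e3 := hC (-(k:ℤ)) hk0
  have esplit : ‖(transOp A (-(k:ℤ)) 0).mulVec s‖
      ≤ ‖(transOp A (-(k:ℤ)) 0).mulVec η‖ + ‖(transOp A (-(k:ℤ)) 0).mulVec u‖ := by
    have : (transOp A (-(k:ℤ)) 0).mulVec s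
        = (transOp A (-(k:ℤ)) 0).mulVec η - (transOp A (-(k:ℤ)) 0).mulVec u := by
      rw [hu_def, Matrix.mulVec_sub]; ring_nf
    rw [this]
    exact norm_sub_le _ _
  simp only [zpow_neg, zpow_natCast] at e1 e2 e3
  -- combine
  have hγk : (0:ℝ) < γ ^ k := by positivity
  have htk : (0:ℝ) < t ^ k := by positivity
  have key : ‖s‖ * t ^ k * γ ^ k ≤ D * r ^ k * (t ^ k * γ ^ k) := by
    have h4 : ‖s‖ ≤ K * ρ ^ k * γ ^ k * (C * (t ^ k)⁻¹ + K * ρ ^ k * (γ ^ k)⁻¹ * ‖u‖) := by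
      calc ‖s‖ ≤ K * ρ ^ k * γ ^ k * ‖(transOp A (-(k:ℤ)) 0).mulVec s‖ := e1
        _ ≤ K * ρ ^ k * γ ^ k * (C * (t ^ k)⁻¹ + K * ρ ^ k * (γ ^ k)⁻¹ * ‖u‖) := by
            apply mul_le_mul_of_nonneg_left _ (by positivity)
            exact le_trans esplit (add_le_add e3 e2)
    have h4' : ‖s‖ * t ^ k * γ ^ k
        ≤ K * C * ((ρ * γ) ^ k * γ ^ k) + K * K * ‖u‖ * ((ρ * ρ) ^ k * (t ^ k * γ ^ k)) := by
      have := mul_le_mul_of_nonneg_right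
        (mul_le_mul_of_nonneg_right h4 htk.le) hγk.le
      calc ‖s‖ * t ^ k * γ ^ k
          ≤ K * ρ ^ k * γ ^ k * (C * (t ^ k)⁻¹ + K * ρ ^ k * (γ ^ k)⁻¹ * ‖u‖) * t ^ k * γ ^ k := this
        _ = K * C * ((ρ * γ) ^ k * γ ^ k) * ((t ^ k)⁻¹ * t ^ k)
            + K * K * ‖u‖ * ((ρ * ρ) ^ k * (t ^ k * γ ^ k)) * ((γ ^ k)⁻¹ * γ ^ k) := by
            rw [mul_pow, mul_pow]; ring
        _ = K * C * ((ρ * γ) ^ k * γ ^ k) + K * K * ‖u‖ * ((ρ * ρ) ^ k * (t ^ k * γ ^ k)) := by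
            rw [inv_mul_cancel₀ htk.ne', inv_mul_cancel₀ hγk.ne', mul_one, mul_one]
    have h5 : (ρ * γ) ^ k * γ ^ k ≤ r ^ k * (t ^ k * γ ^ k) := by
      have hb : ρ * γ ≤ r * t := by
        have := le_max_left (ρ * γ / t) (ρ * ρ)
        calc ρ * γ = (ρ * γ / t) * t := by field_simp
          _ ≤ r * t := mul_le_mul_of_nonneg_right this ht0.le
      calc (ρ * γ) ^ k * γ ^ k ≤ (r * t) ^ k * γ ^ k := by
            apply mul_le_mul_of_nonneg_right _ hγk.le
            exact pow_le_pow_left₀ (by positivity) hb k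
        _ = r ^ k * (t ^ k * γ ^ k) := by rw [mul_pow]; ring
    have h6 : (ρ * ρ) ^ k ≤ r ^ k := pow_le_pow_left₀ (by positivity) (le_max_right _ _) k
    calc ‖s‖ * t ^ k * γ ^ k
        ≤ K * C * ((ρ * γ) ^ k * γ ^ k) + K * K * ‖u‖ * ((ρ * ρ) ^ k * (t ^ k * γ ^ k)) := h4'
      _ ≤ K * C * (r ^ k * (t ^ k * γ ^ k)) + K * K * ‖u‖ * (r ^ k * (t ^ k * γ ^ k)) := by
          apply add_le_add
          · exact mul_le_mul_of_nonneg_left h5 (by positivity)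
          · apply mul_le_mul_of_nonneg_left _ (by positivity)
            exact mul_le_mul_of_nonneg_right h6 (by positivity)
      _ = (K * C + K * K * ‖u‖) * r ^ k * (t ^ k * γ ^ k) := by ring
      _ ≤ D * r ^ k * (t ^ k * γ ^ k) := by
          apply mul_le_mul_of_nonneg_right _ (by positivity)
          apply mul_le_mul_of_nonneg_right _ (by positivity)
          rw [hD_def]; linarith
  have key2 : ‖s‖ ≤ D * r ^ k := by
    have hpos : (0:ℝ) < t ^ k * γ ^ k := by positivity
    have h7 : ‖s‖ * (t ^ k * γ ^ k) ≤ D * r ^ k * (t ^ k * γ ^ k) := by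
      calc ‖s‖ * (t ^ k * γ ^ k) = ‖s‖ * t ^ k * γ ^ k := by ring
        _ ≤ D * r ^ k * (t ^ k * γ ^ k) := key
    exact le_of_mul_le_mul_right h7 hpos
  have hfin : D * r ^ k < ‖s‖ := by
    have := (lt_div_iff₀' hD0).mp hk
    linarith [this]
  linarith

lemma mem_range_of_FwdB (hA : ∀ n, IsUnit (A n)) (hd : EDS (fun n => γ⁻¹ • A n) P K ρ)
    (hγ : 0 < γ) {η : Fin d → ℝ} (h : FwdB A γ η) : (P 0).mulVec η = η := by
  by_contra hne
  have hq : η - (P 0).mulVec η ≠ 0 := fun h0 => hne (by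
    have := sub_eq_zero.mp h0; exact this.symm)
  exact not_FwdB hA hd hγ hq hγ
    (by
      have hρ1 := hd.2.2.2.1
      have hρ := hd.2.2.1
      rw [lt_div_iff₀ hρ]
      nlinarith) h

lemma mem_ker_of_BwdB (hA : ∀ n, IsUnit (A n)) (hd : EDS (fun n => γ⁻¹ • A n) P K ρ)
    (hγ : 0 < γ) {η : Fin d → ℝ} (h : BwdB A γ η) : (P 0).mulVec η = 0 := by
  by_contra hne
  exact not_BwdB hA hd hγ hne
    (by
      have hρ1 := hd.2.2.2.1
      have hρ := hd.2.2.1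
      nlinarith) h

end Charact

section Bohl

variable {P : ℤ → Matrix (Fin d) (Fin d) ℝ} {K ρ γ : ℝ}

/-- The Bohl quotient function. -/
noncomputable def bohlFun (A : ℤ → Matrix (Fin d) (Fin d) ℝ) (ξ : Fin d → ℝ) (p : ℤ × ℤ) : ℝ :=
  (‖(transOp A p.2 0).mulVec ξ‖ / ‖(transOp A p.1 0).mulVec ξ‖) ^ (((p.2 - p.1 : ℤ) : ℝ)⁻¹)

lemma upperBohl_eq (A : ℤ → Matrix (Fin d) (Fin d) ℝ) (ξ : Fin d → ℝ) :
    upperBohl A ξ = limsup (bohlFun A ξ) bohlFilter := rfl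

lemma lowerBohl_eq (A : ℤ → Matrix (Fin d) (Fin d) ℝ) (ξ : Fin d → ℝ) :
    lowerBohl A ξ = liminf (bohlFun A ξ) bohlFilter := rfl

instance bohl_neBot : bohlFilter.NeBot := by
  apply Filter.comap_neBot
  intro t ht
  rcases Filter.mem_atTop_sets.mp ht with ⟨N, hN⟩
  exact ⟨(0, N), hN _ (by simp)⟩

lemma bohl_mem (N : ℤ) : {p : ℤ × ℤ | N ≤ p.2 - p.1} ∈ bohlFilter :=
  Filter.mem_comap.mpr ⟨{x | N ≤ x}, Filter.mem_atTop N, fun _ hp => hp⟩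

lemma bohlFun_nonneg (A : ℤ → Matrix (Fin d) (Fin d) ℝ) (ξ : Fin d → ℝ) (p : ℤ × ℤ) :
    0 ≤ bohlFun A ξ p :=
  Real.rpow_nonneg (div_nonneg (norm_nonneg _) (norm_nonneg _)) _

lemma bohlFun_le {c : ℝ} (hc : 0 < c) {ξ : Fin d → ℝ} {m n : ℤ} (h1 : 1 ≤ n - m)
    (hxm : 0 < ‖(transOp A m 0).mulVec ξ‖)
    (h : ‖(transOp A n 0).mulVec ξ‖ ≤ c ^ (n - m) * ‖(transOp A m 0).mulVec ξ‖) :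
    bohlFun A ξ (m, n) ≤ c := by
  unfold bohlFun
  set t : ℝ := ((n - m : ℤ) : ℝ) with ht_def
  have ht : 0 < t := by
    rw [ht_def]
    exact_mod_cast lt_of_lt_of_le zero_lt_one h1
  have hr : ‖(transOp A n 0).mulVec ξ‖ / ‖(transOp A m 0).mulVec ξ‖ ≤ c ^ t := by
    rw [ht_def, Real.rpow_intCast]
    exact (div_le_iff₀ hxm).mpr h
  calc (‖(transOp A n 0).mulVec ξ‖ / ‖(transOp A m 0).mulVec ξ‖) ^ t⁻¹
      ≤ (c ^ t) ^ t⁻¹ :=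
        Real.rpow_le_rpow (div_nonneg (norm_nonneg _) hxm.le) hr (inv_nonneg.mpr ht.le)
    _ = c ^ (t * t⁻¹) := (Real.rpow_mul hc.le t t⁻¹).symm
    _ = c := by rw [mul_inv_cancel₀ ht.ne', Real.rpow_one]

lemma le_bohlFun {c : ℝ} (hc : 0 < c) {ξ : Fin d → ℝ} {m n : ℤ} (h1 : 1 ≤ n - m)
    (hxm : 0 < ‖(transOp A m 0).mulVec ξ‖)
    (h : c ^ (n - m) * ‖(transOp A m 0).mulVec ξ‖ ≤ ‖(transOp A n 0).mulVec ξ‖) :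
    c ≤ bohlFun A ξ (m, n) := by
  unfold bohlFun
  set t : ℝ := ((n - m : ℤ) : ℝ) with ht_def
  have ht : 0 < t := by
    rw [ht_def]
    exact_mod_cast lt_of_lt_of_le zero_lt_one h1
  have hr : c ^ t ≤ ‖(transOp A n 0).mulVec ξ‖ / ‖(transOp A m 0).mulVec ξ‖ := by
    rw [ht_def, Real.rpow_intCast]
    exact (le_div_iff₀ hxm).mpr h
  calc c = c ^ (t * t⁻¹) := by rw [mul_inv_cancel₀ ht.ne', Real.rpow_one]
    _ = (c ^ t) ^ t⁻¹ := Real.rpow_mul hc.le t t⁻¹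
    _ ≤ (‖(transOp A n 0).mulVec ξ‖ / ‖(transOp A m 0).mulVec ξ‖) ^ t⁻¹ :=
        Real.rpow_le_rpow (Real.rpow_nonneg hc.le t) hr (inv_nonneg.mpr ht.le)

/-- Eventual upper bound on the Bohl quotients from a dichotomy with `ξ` in the range. -/
lemma bohl_eventually_le (hA : ∀ n, IsUnit (A n)) (hd : EDS (fun n => γ⁻¹ • A n) P K ρ)
    (hγ : 0 < γ) {ξ : Fin d → ℝ} (hξ : ξ ≠ 0) (hP : (P 0).mulVec ξ = ξ)
    {c : ℝ} (hc : γ * ρ < c) :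
    ∀ᶠ p in bohlFilter, bohlFun A ξ p ≤ c := by
  have hK := hd.2.1
  have hρ := hd.2.2.1
  have hγρ : (0:ℝ) < γ * ρ := by positivity
  have hc0 : 0 < c := lt_trans hγρ hc
  have hb : 1 < c / (γ * ρ) := (one_lt_div hγρ).mpr hc
  obtain ⟨N, hN⟩ := pow_unbounded_of_one_lt K hb
  filter_upwards [bohl_mem (max 1 (N:ℤ))] with p hp
  obtain ⟨m, n⟩ := p
  simp only [Set.mem_setOf_eq] at hp
  have h1 : 1 ≤ n - m := le_trans (le_max_left _ _) hp
  apply bohlFun_le hc0 h1 (sol_pos hA hξ m)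
  have hest := stable_bound hA hd hγ hP (m := m) (n := n) (by omega)
  have hKle : K ≤ (c / (γ * ρ)) ^ (n - m) := by
    calc K ≤ (c / (γ * ρ)) ^ (N:ℤ) := by
          rw [zpow_natCast]; exact le_of_lt hN
      _ ≤ (c / (γ * ρ)) ^ (n - m) :=
          zpow_le_zpow_right₀ hb.le (le_trans (le_max_right _ _) hp)
  calc ‖(transOp A n 0).mulVec ξ‖
      ≤ K * ρ ^ (n-m) * γ ^ (n-m) * ‖(transOp A m 0).mulVec ξ‖ := hest
    _ = K * (γ * ρ) ^ (n-m) * ‖(transOp A m 0).mulVec ξ‖ := by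
        rw [mul_zpow]; ring
    _ ≤ (c / (γ * ρ)) ^ (n-m) * (γ * ρ) ^ (n-m) * ‖(transOp A m 0).mulVec ξ‖ := by
        apply mul_le_mul_of_nonneg_right _ (norm_nonneg _)
        exact mul_le_mul_of_nonneg_right hKle (le_of_lt (zpow_pos hγρ _))
    _ = c ^ (n-m) * ‖(transOp A m 0).mulVec ξ‖ := by
        rw [div_zpow, div_mul_cancel₀]
        exact zpow_ne_zero _ hγρ.ne'

/-- Eventual lower bound on the Bohl quotients from a dichotomy with `ξ` in the kernel. -/
lemma bohl_eventually_ge (hA : ∀ n, IsUnit (A n)) (hd : EDS (fun n => γ⁻¹ • A n) P K ρ)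
    (hγ : 0 < γ) {ξ : Fin d → ℝ} (hξ : ξ ≠ 0) (hP : (P 0).mulVec ξ = 0)
    {c : ℝ} (hc0 : 0 < c) (hc : c < γ / ρ) :
    ∀ᶠ p in bohlFilter, c ≤ bohlFun A ξ p := by
  have hK := hd.2.1
  have hρ := hd.2.2.1
  have hcρ : (0:ℝ) < c * ρ := by positivity
  have hb : 1 < γ / (c * ρ) := by
    rw [lt_div_iff₀ hcρ]
    rw [lt_div_iff₀ hρ] at hc
    linarith
  obtain ⟨N, hN⟩ := pow_unbounded_of_one_lt K hb
  filter_upwards [bohl_mem (max 1 (N:ℤ))] with p hp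
  obtain ⟨m, n⟩ := p
  simp only [Set.mem_setOf_eq] at hp
  have h1 : 1 ≤ n - m := le_trans (le_max_left _ _) hp
  apply le_bohlFun hc0 h1 (sol_pos hA hξ m)
  have hest := unstable_lower hA hd hγ hP (m := m) (n := n) (by omega)
  have hKle : K ≤ (γ / (c * ρ)) ^ (n - m) := by
    calc K ≤ (γ / (c * ρ)) ^ (N:ℤ) := by
          rw [zpow_natCast]; exact le_of_lt hN
      _ ≤ (γ / (c * ρ)) ^ (n - m) :=
          zpow_le_zpow_right₀ hb.le (le_trans (le_max_right _ _) hp)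
  -- from hest : γ^(n-m) ‖x m‖ ≤ K ρ^(n-m) ‖x n‖
  -- and K ρ^(n-m) ≤ (γ/c)^(n-m) : want c^(n-m) ‖x m‖ ≤ ‖x n‖
  have hKρ : K * ρ ^ (n-m) * c ^ (n-m) ≤ γ ^ (n-m) := by
    calc K * ρ ^ (n-m) * c ^ (n-m)
        ≤ (γ / (c * ρ)) ^ (n-m) * ρ ^ (n-m) * c ^ (n-m) := by
          apply mul_le_mul_of_nonneg_right _ (le_of_lt (zpow_pos hc0 _))
          exact mul_le_mul_of_nonneg_right hKle (le_of_lt (zpow_pos hρ _))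
      _ = (γ / (c * ρ)) ^ (n-m) * (c * ρ) ^ (n-m) := by rw [mul_zpow]; ring
      _ = γ ^ (n-m) := by
          rw [div_zpow, div_mul_cancel₀]
          exact zpow_ne_zero _ hcρ.ne'
  have hxm := (sol_pos hA hξ m).le
  have hxn := (sol_pos hA hξ n).le
  -- multiply hest by c^(n-m), divide by (K ρ^(n-m))
  have hKρpos : (0:ℝ) < K * ρ ^ (n-m) := by positivity
  have step : (K * ρ ^ (n-m)) * (c ^ (n-m) * ‖(transOp A m 0).mulVec ξ‖)
      ≤ (K * ρ ^ (n-m)) * ‖(transOp A n 0).mulVec ξ‖ := by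
    calc (K * ρ ^ (n-m)) * (c ^ (n-m) * ‖(transOp A m 0).mulVec ξ‖)
        = (K * ρ ^ (n-m) * c ^ (n-m)) * ‖(transOp A m 0).mulVec ξ‖ := by ring
      _ ≤ γ ^ (n-m) * ‖(transOp A m 0).mulVec ξ‖ :=
          mul_le_mul_of_nonneg_right hKρ hxm
      _ ≤ K * ρ ^ (n-m) * ‖(transOp A n 0).mulVec ξ‖ := hest
      _ = (K * ρ ^ (n-m)) * ‖(transOp A n 0).mulVec ξ‖ := by ring
  exact le_of_mul_le_mul_left step hKρpos

end Bohl

section Propagate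

lemma fwd_propagate (hA : ∀ n, IsUnit (A n)) {gc γ : ℝ} (hγ0 : 0 < γ) (hγgc : γ ≤ gc)
    (hres : ∀ t, γ ≤ t → t ≤ gc →
      ∃ P K ρ, EDS (fun n => t⁻¹ • A n) P K ρ)
    {ξ : Fin d → ℝ} (hgc : FwdB A gc ξ) : FwdB A γ ξ := by
  by_contra hnot
  set T : Set ℝ := {t | γ ≤ t ∧ t ≤ gc ∧ ¬ FwdB A t ξ} with hT_def
  have hTne : T.Nonempty := ⟨γ, le_rfl, hγgc, hnot⟩
  have hTbdd : BddAbove T := ⟨gc, fun t ht => ht.2.1⟩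
  set γs : ℝ := sSup T with hγs_def
  have hγγs : γ ≤ γs := le_csSup hTbdd ⟨le_rfl, hγgc, hnot⟩
  have hγsgc : γs ≤ gc := csSup_le hTne (fun t ht => ht.2.1)
  have hγs0 : 0 < γs := lt_of_lt_of_le hγ0 hγγs
  obtain ⟨P, K, ρ, hd⟩ := hres γs hγγs hγsgc
  have hρ := hd.2.2.1
  have hρ1 := hd.2.2.2.1
  by_cases hPξ : (P 0).mulVec ξ = ξ
  · -- stable case: all elements of T are < γs * ρ
    have hmem : FwdB A (γs * ρ) ξ := stable_mem_FwdB hA hd hγs0 hPξ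
    have hub : ∀ t ∈ T, t ≤ γs * ρ := by
      intro t ht
      by_contra hgt
      push_neg at hgt
      exact ht.2.2 (FwdB_mono (by positivity) hgt.le hmem)
    have : γs ≤ γs * ρ := csSup_le hTne hub
    nlinarith
  · -- unstable case
    have hq : ξ - (P 0).mulVec ξ ≠ 0 := fun h0 => hPξ (sub_eq_zero.mp h0).symm
    have hγsρ : γs < γs / ρ := by
      rw [lt_div_iff₀ hρ]
      nlinarith
    by_cases hgcγs : gc ≤ γs
    · have hEq : γs = gc := le_antisymm hγsgc hgcγs
      exact not_FwdB hA hd hγs0 hq (lt_of_lt_of_le hγ0 hγgc)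
        (by rw [← hEq]; exact hγsρ) hgc
    · push_neg at hgcγs
      set t : ℝ := min gc ((γs + γs / ρ) / 2) with ht_def
      have hmid1 : γs < (γs + γs / ρ) / 2 := by linarith
      have hmid2 : (γs + γs / ρ) / 2 < γs / ρ := by linarith
      have htγs : γs < t := lt_min hgcγs hmid1
      have htgc : t ≤ gc := min_le_left _ _
      have ht0 : 0 < t := lt_trans hγs0 htγs
      have htlt : t < γs / ρ := lt_of_le_of_lt (min_le_right _ _) hmid2
      have htT : t ∈ T := ⟨le_trans hγγs htγs.le, htgc, not_FwdB hA hd hγs0 hq ht0 htlt⟩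
      have := le_csSup hTbdd htT
      rw [← hγs_def] at this
      linarith

lemma bwd_propagate (hA : ∀ n, IsUnit (A n)) {gp γ : ℝ} (hgp0 : 0 < gp) (hgpγ : gp ≤ γ)
    (hres : ∀ t, gp ≤ t → t ≤ γ →
      ∃ P K ρ, EDS (fun n => t⁻¹ • A n) P K ρ)
    {ξ : Fin d → ℝ} (hgp : BwdB A gp ξ) : BwdB A γ ξ := by
  by_contra hnot
  set T : Set ℝ := {t | gp ≤ t ∧ t ≤ γ ∧ ¬ BwdB A t ξ} with hT_def
  have hTne : T.Nonempty := ⟨γ, hgpγ, le_rfl, hnot⟩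
  have hTbdd : BddBelow T := ⟨gp, fun t ht => ht.1⟩
  set γs : ℝ := sInf T with hγs_def
  have hγsγ : γs ≤ γ := csInf_le hTbdd ⟨hgpγ, le_rfl, hnot⟩
  have hgpγs : gp ≤ γs := le_csInf hTne (fun t ht => ht.1)
  have hγs0 : 0 < γs := lt_of_lt_of_le hgp0 hgpγs
  obtain ⟨P, K, ρ, hd⟩ := hres γs hgpγs hγsγ
  have hρ := hd.2.2.1
  have hρ1 := hd.2.2.2.1
  have hγsρ : γs < γs / ρ := by
    rw [lt_div_iff₀ hρ]
    nlinarith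
  by_cases hPξ : (P 0).mulVec ξ = 0
  · have hmem : BwdB A (γs / ρ) ξ := unstable_mem_BwdB hA hd hγs0 hPξ
    have hlb : ∀ t ∈ T, γs / ρ ≤ t := by
      intro t ht
      by_contra hlt
      push_neg at hlt
      exact ht.2.2 (BwdB_anti (lt_of_lt_of_le hgp0 ht.1) hlt.le hmem)
    have : γs / ρ ≤ γs := le_csInf hTne hlb
    linarith
  · by_cases hγsgp : γs ≤ gp
    · have hEq : γs = gp := le_antisymm hγsgp hgpγs
      refine not_BwdB hA hd hγs0 hPξ (t := gp) ?_ hgp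
      rw [hEq]
      nlinarith
    · push_neg at hγsgp
      set t : ℝ := max gp ((γs * ρ + γs) / 2) with ht_def
      have hmid1 : γs * ρ < (γs * ρ + γs) / 2 := by nlinarith
      have hmid2 : (γs * ρ + γs) / 2 < γs := by nlinarith
      have htγs : t < γs := max_lt hγsgp hmid2
      have htgp : gp ≤ t := le_max_left _ _
      have htρ : γs * ρ < t := lt_of_lt_of_le hmid1 (le_max_right _ _)
      have htT : t ∈ T := ⟨htgp, le_trans htγs.le hγsγ,
        not_BwdB hA hd hγs0 hPξ htρ⟩
      have := csInf_le hTbdd htT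
      rw [← hγs_def] at this
      linarith

end Propagate

end BohlAux


namespace BohlAux

lemma eds_of {d : ℕ} {A P : ℤ → Matrix (Fin d) (Fin d) ℝ} {K ρ : ℝ}
    (h : ExpDichotomy A P K ρ) : EDS A P K ρ := ⟨h.1, h.2⟩

end BohlAux

open BohlAux in
theorem stmt7 {d : ℕ} (A : ℤ → Matrix (Fin d) (Fin d) ℝ)
    (hA : ∀ n, IsUnit (A n)) (M : ℝ)
    (hbd : ∀ n : ℤ, ‖A n‖ ≤ M ∧ ‖(A n)⁻¹‖ ≤ M)
    (a b : ℕ → ℝ) (l : ℕ) (hl : 1 ≤ l)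
    (hspec : edSpectrum A = ⋃ j ∈ Finset.Icc 1 l, Set.Icc (a j) (b j))
    (hpos : 0 < a 1) (hab : ∀ j, 1 ≤ j → j ≤ l → a j ≤ b j)
    (hsep : ∀ j, 1 ≤ j → j < l → b j < a (j + 1))
    (i : ℕ) (hi1 : 1 ≤ i) (hil : i ≤ l) (gp gc : ℝ)
    (hgp : if i = 1 then 0 < gp ∧ gp < a 1 else b (i - 1) < gp ∧ gp < a i)
    (hgc : if i = l then b l < gc else b i < gc ∧ gc < a (i + 1))
    (Pp Pc : ℤ → Matrix (Fin d) (Fin d) ℝ) (Kp rp Kc rc : ℝ)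
    (hdp : ExpDichotomy (fun n => gp⁻¹ • A n) Pp Kp rp)
    (hdc : ExpDichotomy (fun n => gc⁻¹ • A n) Pc Kc rc)
    (ξ : Fin d → ℝ) (hξ : ξ ≠ 0)
    (hker : (Pp 0).mulVec ξ = 0) (him : (Pc 0).mulVec ξ = ξ) :
    lowerBohl A ξ ∈ Set.Icc (a i) (b i) ∧
      Set.Icc (lowerBohl A ξ) (upperBohl A ξ) ⊆ Set.Icc (a i) (b i) := by
  classical
  have hdp' : EDS (fun n => gp⁻¹ • A n) Pp Kp rp := eds_of hdp
  have hdc' : EDS (fun n => gc⁻¹ • A n) Pc Kc rc := eds_of hdc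
  have hrp0 := hdp'.2.2.1
  have hrp1 := hdp'.2.2.2.1
  have hrc0 := hdc'.2.2.1
  have hrc1 := hdc'.2.2.2.1
  -- monotonicity of spectral intervals
  have mono_a : ∀ j k, 1 ≤ j → j ≤ k → k ≤ l → a j ≤ a k := by
    intro j k h1 hjk hkl
    induction k, hjk using Nat.le_induction with
    | base => exact le_rfl
    | succ k hk ih =>
        have hkl' : k ≤ l := by omega
        have h2 : a j ≤ a k := ih hkl'
        have h3 : a k ≤ b k := hab k (by omega) hkl'
        have h4 : b k < a (k+1) := hsep k (by omega) (by omega)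
        linarith
  have mono_b : ∀ j k, 1 ≤ j → j ≤ k → k ≤ l → b j ≤ b k := by
    intro j k h1 hjk hkl
    induction k, hjk using Nat.le_induction with
    | base => exact le_rfl
    | succ k hk ih =>
        have hkl' : k ≤ l := by omega
        have h2 : b j ≤ b k := ih hkl'
        have h4 : b k < a (k+1) := hsep k (by omega) (by omega)
        have h5 : a (k+1) ≤ b (k+1) := hab (k+1) (by omega) hkl
        linarith
  have hai0 : 0 < a i := lt_of_lt_of_le hpos (mono_a 1 i le_rfl hi1 hil)
  have hbi0 : 0 < b i := lt_of_lt_of_le hai0 (hab i hi1 hil)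
  -- facts about gp
  have hgp0 : 0 < gp := by
    by_cases h1 : i = 1
    · rw [if_pos h1] at hgp; exact hgp.1
    · rw [if_neg h1] at hgp
      have : 0 < b (i-1) :=
        lt_of_lt_of_le hpos (le_trans (mono_a 1 (i-1) le_rfl (by omega) (by omega))
          (hab (i-1) (by omega) (by omega)))
      linarith
  have hgpai : gp < a i := by
    by_cases h1 : i = 1
    · rw [if_pos h1] at hgp; rw [h1]; exact hgp.2
    · rw [if_neg h1] at hgp; exact hgp.2
  have hbi1gp : ∀ j, 1 ≤ j → j < i → b j < gp := by
    intro j hj1 hji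
    have h1 : i ≠ 1 := by omega
    rw [if_neg h1] at hgp
    exact lt_of_le_of_lt (mono_b j (i-1) hj1 (by omega) (by omega)) hgp.1
  -- facts about gc
  have hbigc : b i < gc := by
    by_cases h1 : i = l
    · rw [if_pos h1] at hgc; rw [h1]; exact hgc
    · rw [if_neg h1] at hgc; exact hgc.1
  have hgc0 : 0 < gc := lt_trans hbi0 hbigc
  have hgcaj : ∀ j, i < j → j ≤ l → gc < a j := by
    intro j hij hjl
    have h1 : i ≠ l := by omega
    rw [if_neg h1] at hgc
    exact lt_of_lt_of_le hgc.2 (mono_a (i+1) j (by omega) (by omega) hjl)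
  -- resolvent: existence of dichotomies off the spectrum
  have hres : ∀ t : ℝ, 0 < t → (∀ j, 1 ≤ j → j ≤ l → t < a j ∨ b j < t) →
      ∃ P K ρ, EDS (fun n => t⁻¹ • A n) P K ρ := by
    intro t ht0 hgap
    have hts : t ∉ edSpectrum A := by
      rw [hspec]
      simp only [Set.mem_iUnion]
      rintro ⟨j, hj, hmem⟩
      rw [Finset.mem_Icc] at hj
      rw [Set.mem_Icc] at hmem
      rcases hgap j hj.1 hj.2 with h | h
      · linarith [hmem.1]
      · linarith [hmem.2]
    rw [edSpectrum, Set.mem_setOf_eq] at hts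
    push_neg at hts
    obtain ⟨P, K, ρ, h⟩ := hts ht0
    exact ⟨P, K, ρ, eds_of h⟩
  have hresU : ∀ t : ℝ, b i < t → t ≤ gc → ∃ P K ρ, EDS (fun n => t⁻¹ • A n) P K ρ := by
    intro t hbt htgc
    refine hres t (lt_trans hbi0 hbt) ?_
    intro j hj1 hjl
    rcases lt_or_ge i j with hij | hij
    · exact Or.inl (lt_of_le_of_lt htgc (hgcaj j hij hjl))
    · exact Or.inr (lt_of_le_of_lt (mono_b j i hj1 hij hil) hbt)
  have hresL : ∀ t : ℝ, gp ≤ t → t < a i → ∃ P K ρ, EDS (fun n => t⁻¹ • A n) P K ρ := by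
    intro t hgpt htai
    refine hres t (lt_of_lt_of_le hgp0 hgpt) ?_
    intro j hj1 hjl
    rcases le_or_gt i j with hij | hij
    · exact Or.inl (lt_of_lt_of_le htai (mono_a i j hi1 hij hjl))
    · exact Or.inr (lt_of_lt_of_le (hbi1gp j hj1 hij) hgpt)
  -- boundedness data
  have hFgc : FwdB A gc ξ :=
    FwdB_mono (by positivity) (by nlinarith : gc * rc ≤ gc)
      (stable_mem_FwdB hA hdc' hgc0 him)
  have hBgp : BwdB A gp ξ :=
    BwdB_anti hgp0 (by
      rw [le_div_iff₀ hrp0]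
      nlinarith : gp ≤ gp / rp)
      (unstable_mem_BwdB hA hdp' hgp0 hker)
  -- eventual bounds for the Bohl quotient (used for (co)boundedness)
  have hevUB : ∀ᶠ p in bohlFilter, bohlFun A ξ p ≤ gc * rc + 1 :=
    bohl_eventually_le hA hdc' hgc0 hξ him (by linarith)
  have hbddAbove : Filter.IsBoundedUnder (· ≤ ·) bohlFilter (bohlFun A ξ) :=
    ⟨gc * rc + 1, by rwa [Filter.eventually_map]⟩
  have hbddBelow : Filter.IsBoundedUnder (· ≥ ·) bohlFilter (bohlFun A ξ) :=
    ⟨0, by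
      rw [Filter.eventually_map]
      exact Filter.Eventually.of_forall (bohlFun_nonneg A ξ)⟩
  have hcoUB : Filter.IsCoboundedUnder (· ≤ ·) bohlFilter (bohlFun A ξ) :=
    hbddBelow.isCoboundedUnder_le
  have hcoLB : Filter.IsCoboundedUnder (· ≥ ·) bohlFilter (bohlFun A ξ) :=
    hbddAbove.isCoboundedUnder_ge
  -- key upper estimate
  have hUB : ∀ γ : ℝ, b i < γ → γ < gc → upperBohl A ξ ≤ γ := by
    intro γ hbγ hγgc
    have hγ0 : 0 < γ := lt_trans hbi0 hbγ
    have hFγ : FwdB A γ ξ := by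
      apply fwd_propagate hA hγ0 hγgc.le _ hFgc
      intro t hγt htgc
      exact hresU t (lt_of_lt_of_le hbγ hγt) htgc
    obtain ⟨P, K, ρ, hd⟩ := hresU γ hbγ hγgc.le
    have hPξ : (P 0).mulVec ξ = ξ := mem_range_of_FwdB hA hd hγ0 hFγ
    have hρ0 := hd.2.2.1
    have hρ1 := hd.2.2.2.1
    have hev := bohl_eventually_le hA hd hγ0 hξ hPξ (c := γ) (by nlinarith)
    rw [upperBohl_eq]
    exact Filter.limsup_le_of_le hcoUB hev
  -- key lower estimate
  have hLB : ∀ γ : ℝ, gp < γ → γ < a i → γ ≤ lowerBohl A ξ := by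
    intro γ hgpγ hγai
    have hγ0 : 0 < γ := lt_trans hgp0 hgpγ
    have hBγ : BwdB A γ ξ := by
      apply bwd_propagate hA hgp0 hgpγ.le _ hBgp
      intro t hgpt htγ
      exact hresL t hgpt (lt_of_le_of_lt htγ hγai)
    obtain ⟨P, K, ρ, hd⟩ := hresL γ hgpγ.le hγai
    have hPξ : (P 0).mulVec ξ = 0 := mem_ker_of_BwdB hA hd hγ0 hBγ
    have hρ0 := hd.2.2.1
    have hρ1 := hd.2.2.2.1
    have hev := bohl_eventually_ge hA hd hγ0 hξ hPξ (c := γ) hγ0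
      (by rw [lt_div_iff₀ hρ0]; nlinarith)
    rw [lowerBohl_eq]
    exact Filter.le_liminf_of_le hcoLB hev
  -- conclusions
  have hlow_le_up : lowerBohl A ξ ≤ upperBohl A ξ := by
    rw [lowerBohl_eq, upperBohl_eq]
    exact Filter.liminf_le_limsup hbddAbove hbddBelow
  have hai_le : a i ≤ lowerBohl A ξ := by
    by_contra hcon
    push_neg at hcon
    set γ : ℝ := (max gp (lowerBohl A ξ) + a i) / 2 with hγ_def
    have h1 : max gp (lowerBohl A ξ) < a i := max_lt hgpai hcon
    have h2 : gp < γ := by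
      rw [hγ_def]
      nlinarith [le_max_left gp (lowerBohl A ξ)]
    have h3 : γ < a i := by
      rw [hγ_def]
      nlinarith [max_lt hgpai hcon]
    have h4 : lowerBohl A ξ < γ := by
      rw [hγ_def]
      nlinarith [le_max_right gp (lowerBohl A ξ)]
    have := hLB γ h2 h3
    linarith
  have hup_le : upperBohl A ξ ≤ b i := by
    by_contra hcon
    push_neg at hcon
    set γ : ℝ := (b i + min gc (upperBohl A ξ)) / 2 with hγ_def
    have h1 : b i < min gc (upperBohl A ξ) := lt_min hbigc hcon
    have h2 : b i < γ := by rw [hγ_def]; nlinarith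
    have h3 : γ < gc := by
      rw [hγ_def]
      nlinarith [min_le_left gc (upperBohl A ξ)]
    have h4 : γ < upperBohl A ξ := by
      rw [hγ_def]
      nlinarith [min_le_right gc (upperBohl A ξ)]
    have := hUB γ h2 h3
    linarith
  refine ⟨⟨hai_le, le_trans hlow_le_up hup_le⟩, Set.Icc_subset_Icc hai_le hup_le⟩
end

section
/- Let the exponential dichotomy spectrum of x_{n+1} = A(n)x_n be [a_1,b_1] ∪ ⋯ ∪ [a_ℓ,b_ℓ] with a_1 ≤ b_1 < ⋯ < a_ℓ ≤ b_ℓ. Then for every ξ ∈ ℝ^d \ {0}, the interval [β̲_A(ξ), β̄_A(ξ)] spanned by the lower and upper Bohl exponents of the solution through ξ is contained in [a_1, b_ℓ]. -/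
open Filter

attribute [local instance] Matrix.linftyOpNormedRing Matrix.linftyOpNormedAlgebra

variable {d : ℕ} (A : ℤ → Matrix (Fin d) (Fin d) ℝ)

private lemma bindmap (l : List ℕ) :
    (@Bind.bind List (@Monad.toBind List List.instMonad) ℕ ℤ l
      (fun a => @Pure.pure List (@Applicative.toPure List (@Monad.toApplicative List List.instMonad)) ℤ (Nat.cast a)))
      = List.map (fun a : ℕ => (a:ℤ)) l := by
  induction l <;> simp_all

lemma phi_ofNat (n : ℕ) :
    Phi A (Int.ofNat n) = ((List.range n).map (fun j : ℕ => A ((n:ℤ) - 1 - j))).prod := by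
  show (List.map _ _).prod = _
  rw [bindmap (List.range n), List.map_map]
  simp only [Function.comp_def]

lemma phi_negSucc (n : ℕ) :
    Phi A (Int.negSucc n) = ((List.range (n+1)).map (fun j : ℕ => (A (Int.negSucc n + j))⁻¹)).prod := by
  show (List.map _ _).prod = _
  rw [bindmap (List.range (n+1)), List.map_map]
  simp only [Function.comp_def]

lemma prodrange (n : ℕ) (f : ℕ → Matrix (Fin d) (Fin d) ℝ) :
    ((List.range (n+1)).map f).prod = f 0 * ((List.range n).map (fun j => f (j+1))).prod := by
  rw [List.range_succ_eq_map, List.map_cons, List.prod_cons, List.map_map]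
  rfl

lemma phi_zero : Phi A 0 = 1 := by
  have := phi_ofNat A 0
  simpa using this

lemma phi_succ (hA : ∀ n, IsUnit (A n)) (k : ℤ) : Phi A (k + 1) = A k * Phi A k := by
  have hinv : ∀ m : ℤ, A m * (A m)⁻¹ = 1 := fun m =>
    Matrix.mul_nonsing_inv _ ((Matrix.isUnit_iff_isUnit_det _).mp (hA m))
  cases k with
  | ofNat n =>
      have h1 : (Int.ofNat n) + 1 = Int.ofNat (n+1) := rfl
      rw [h1, phi_ofNat, phi_ofNat, prodrange]
      refine congrArg₂ (· * ·) ?_ ?_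
      · rw [show ((((n+1:ℕ)):ℤ) - 1 - ((0:ℕ):ℤ)) = (Int.ofNat n) by simp only [Int.ofNat_eq_natCast]; push_cast; ring]
      · refine congrArg List.prod (List.map_congr_left fun j hj => ?_)
        rw [show ((((n+1:ℕ)):ℤ) - 1 - (((j+1:ℕ)):ℤ)) = ((n:ℤ) - 1 - (j:ℤ)) by push_cast; ring]
  | negSucc n =>
      cases n with
      | zero =>
          have h1 : Int.negSucc 0 + 1 = Int.ofNat 0 := rfl
          rw [h1, phi_ofNat, phi_negSucc]
          rw [prodrange 0]
          simp only [List.range_zero, List.map_nil, List.prod_nil, mul_one]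
          rw [show Int.negSucc 0 + ((0:ℕ):ℤ) = Int.negSucc 0 by simp, hinv]
      | succ m =>
          have h1 : Int.negSucc (m+1) + 1 = Int.negSucc m := rfl
          rw [h1, phi_negSucc, phi_negSucc, prodrange (m+1),
            show Int.negSucc (m+1) + ((0:ℕ):ℤ) = Int.negSucc (m+1) by simp,
            ← mul_assoc, hinv, one_mul]
          refine congrArg List.prod (List.map_congr_left fun j hj => ?_)
          congr 2
          simp only [Int.negSucc_eq]; push_cast; ring

lemma phi_isUnit (hA : ∀ n, IsUnit (A n)) (k : ℤ) : IsUnit (Phi A k) := by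
  induction k using Int.induction_on with
  | zero => rw [phi_zero]; exact isUnit_one
  | succ n ih => rw [phi_succ A hA]; exact (hA _).mul ih
  | pred n ih =>
      have h := phi_succ A hA (-(n:ℤ) - 1)
      rw [sub_add_cancel] at h
      rw [Matrix.isUnit_iff_isUnit_det] at ih ⊢
      rw [h, Matrix.det_mul] at ih
      exact isUnit_of_mul_isUnit_right ih

lemma cancel_left (B : Matrix (Fin d) (Fin d) ℝ) (hB : IsUnit B)
    {x y : Matrix (Fin d) (Fin d) ℝ} (h : B * x = B * y) : x = y := by
  have h2 := congrArg (fun z => B⁻¹ * z) h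
  simpa [← mul_assoc, Matrix.nonsing_inv_mul _ ((Matrix.isUnit_iff_isUnit_det _).mp hB)] using h2

lemma unique_sol (B : ℤ → Matrix (Fin d) (Fin d) ℝ) (hB : ∀ n, IsUnit (B n))
    (f g : ℤ → Matrix (Fin d) (Fin d) ℝ) (h0 : f 0 = g 0)
    (hf : ∀ k : ℤ, f (k+1) = B k * f k) (hg : ∀ k : ℤ, g (k+1) = B k * g k) :
    ∀ k : ℤ, f k = g k := by
  intro k
  induction k using Int.induction_on with
  | zero => exact h0
  | succ n ih => rw [hf, hg, ih]
  | pred n ih =>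
      have hfn := hf (-(n:ℤ) - 1); rw [sub_add_cancel] at hfn
      have hgn := hg (-(n:ℤ) - 1); rw [sub_add_cancel] at hgn
      exact cancel_left _ (hB _) (by rw [← hfn, ← hgn, ih])

lemma mat_smul_inv (c : ℝ) (hc : c ≠ 0) (X : Matrix (Fin d) (Fin d) ℝ) (hX : IsUnit X) :
    (c • X)⁻¹ = c⁻¹ • X⁻¹ := by
  apply Matrix.inv_eq_right_inv
  rw [smul_mul_smul_comm, Matrix.mul_nonsing_inv _ ((Matrix.isUnit_iff_isUnit_det _).mp hX),
    mul_inv_cancel₀ hc, one_smul]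

lemma smul_isUnit (c : ℝ) (hc : c ≠ 0) {X : Matrix (Fin d) (Fin d) ℝ} (hX : IsUnit X) :
    IsUnit (c • X) := by
  rw [Matrix.isUnit_iff_isUnit_det] at hX ⊢
  rw [Matrix.det_smul, Fintype.card_fin]
  exact (IsUnit.pow d (isUnit_iff_ne_zero.mpr hc)).mul hX

lemma phi_smul (hA : ∀ n, IsUnit (A n)) (c : ℝ) (hc : c ≠ 0) (k : ℤ) :
    Phi (fun n => c • A n) k = c ^ k • Phi A k := by
  have hB : ∀ n : ℤ, IsUnit (c • A n) := fun n => smul_isUnit c hc (hA n)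
  refine unique_sol (fun n => c • A n) hB _ (fun k => c ^ k • Phi A k) ?_ (phi_succ _ hB) ?_ k
  · show _ = c ^ (0:ℤ) • Phi A (0:ℤ)
    rw [phi_zero, phi_zero, zpow_zero, one_smul]
  · intro k
    show c ^ (k+1) • Phi A (k+1) = (c • A k) * (c ^ k • Phi A k)
    rw [phi_succ A hA, zpow_add_one₀ hc, smul_mul_assoc, mul_smul_comm, smul_smul, mul_comm]

lemma phi_smul' (hA : ∀ n, IsUnit (A n)) {γ : ℝ} (hγ : 0 < γ) (k : ℤ) :
    Phi (fun n => γ⁻¹ • A n) k = γ ^ (-k) • Phi A k := by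
  rw [phi_smul A hA γ⁻¹ (inv_ne_zero hγ.ne'), inv_zpow, ← zpow_neg]

lemma transOp_smul (hA : ∀ n, IsUnit (A n)) {γ : ℝ} (hγ : 0 < γ) (m n : ℤ) :
    transOp (fun j => γ⁻¹ • A j) m n = γ ^ (n - m) • transOp A m n := by
  unfold transOp
  rw [phi_smul' A hA hγ, phi_smul' A hA hγ,
    mat_smul_inv _ (zpow_ne_zero _ hγ.ne') _ (phi_isUnit A hA n),
    smul_mul_smul_comm, ← zpow_neg, ← zpow_add₀ hγ.ne']
  ring_nf

lemma transOp_self (hA : ∀ n, IsUnit (A n)) (l : ℤ) : transOp A l l = 1 :=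
  Matrix.mul_nonsing_inv _ ((Matrix.isUnit_iff_isUnit_det _).mp (phi_isUnit A hA l))

lemma transOp_phi (hA : ∀ n, IsUnit (A n)) (k l : ℤ) : transOp A k l * Phi A l = Phi A k := by
  unfold transOp
  rw [mul_assoc, Matrix.nonsing_inv_mul _ ((Matrix.isUnit_iff_isUnit_det _).mp (phi_isUnit A hA l)),
    mul_one]

lemma transOp_succ (hA : ∀ n, IsUnit (A n)) (k l : ℤ) :
    transOp A (k + 1) l = A k * transOp A k l := by
  unfold transOp
  rw [phi_succ A hA, mul_assoc]

lemma transOp_succ' (hA : ∀ n, IsUnit (A n)) (k l : ℤ) :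
    transOp A l (k + 1) = transOp A l k * (A k)⁻¹ := by
  unfold transOp
  rw [phi_succ A hA, Matrix.mul_inv_rev, ← mul_assoc]

lemma norm_one_mat (hd : 0 < d) : ‖(1 : Matrix (Fin d) (Fin d) ℝ)‖ = 1 := by
  haveI : Nonempty (Fin d) := ⟨⟨0, hd⟩⟩
  exact norm_one

lemma M_ge_one (hA : ∀ n, IsUnit (A n)) (M : ℝ) (hbd : ∀ n : ℤ, ‖A n‖ ≤ M ∧ ‖(A n)⁻¹‖ ≤ M)
    (hd : 0 < d) : 1 ≤ M := by
  have h1 : A 0 * (A 0)⁻¹ = 1 :=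
    Matrix.mul_nonsing_inv _ ((Matrix.isUnit_iff_isUnit_det _).mp (hA 0))
  have h2 : (1:ℝ) ≤ ‖A 0‖ * ‖(A 0)⁻¹‖ := by
    calc (1:ℝ) = ‖(1 : Matrix (Fin d) (Fin d) ℝ)‖ := (norm_one_mat hd).symm
    _ = ‖A 0 * (A 0)⁻¹‖ := by rw [h1]
    _ ≤ ‖A 0‖ * ‖(A 0)⁻¹‖ := norm_mul_le _ _
  nlinarith [(hbd 0).1, (hbd 0).2, norm_nonneg (A 0), norm_nonneg (A 0)⁻¹]

lemma norm_transOp_le (hA : ∀ n, IsUnit (A n)) (M : ℝ)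
    (hbd : ∀ n : ℤ, ‖A n‖ ≤ M ∧ ‖(A n)⁻¹‖ ≤ M) (hd : 0 < d) (l : ℤ) (n : ℕ) :
    ‖transOp A (l + n) l‖ ≤ M ^ n ∧ ‖transOp A l (l + n)‖ ≤ M ^ n := by
  have hM0 : 0 ≤ M := le_trans zero_le_one (M_ge_one A hA M hbd hd)
  induction n with
  | zero => simp [transOp_self A hA, norm_one_mat hd]
  | succ n ih =>
      have hcast : l + ((n:ℤ) + 1) = (l + n) + 1 := by ring
      constructor
      · calc ‖transOp A (l + (n+1:ℕ)) l‖ = ‖A (l+n) * transOp A (l + n) l‖ := by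
              push_cast
              rw [hcast, transOp_succ A hA]
        _ ≤ ‖A (l+n)‖ * ‖transOp A (l + n) l‖ := norm_mul_le _ _
        _ ≤ M * M ^ n := mul_le_mul (hbd _).1 ih.1 (norm_nonneg _) hM0
        _ = M ^ (n+1) := (pow_succ' M n).symm
      · calc ‖transOp A l (l + (n+1:ℕ))‖ = ‖transOp A l (l + n) * (A (l+n))⁻¹‖ := by
              push_cast
              rw [hcast, transOp_succ' A hA]
        _ ≤ ‖transOp A l (l + n)‖ * ‖(A (l+n))⁻¹‖ := norm_mul_le _ _
        _ ≤ M ^ n * M := mul_le_mul ih.2 (hbd _).2 (norm_nonneg _) (by positivity)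
        _ = M ^ (n+1) := (pow_succ M n).symm

lemma proj_comm_phi {B P : ℤ → Matrix (Fin d) (Fin d) ℝ}
    (hB : ∀ n, IsUnit (B n)) (hP : IsInvProjector B P) (n : ℕ) :
    P n * Phi B n = Phi B n * P 0 := by
  induction n with
  | zero => simp [phi_zero]
  | succ n ih =>
      have hc : ((n+1:ℕ) : ℤ) = (n:ℤ) + 1 := by push_cast; ring
      rw [hc, phi_succ B hB, ← mul_assoc, (hP n).2, mul_assoc, ih, ← mul_assoc]

lemma cancel_right (B : Matrix (Fin d) (Fin d) ℝ) (hB : IsUnit B)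
    {x y : Matrix (Fin d) (Fin d) ℝ} (h : x * B = y * B) : x = y := by
  have h2 := congrArg (fun z => z * B⁻¹) h
  simpa [mul_assoc, Matrix.mul_nonsing_inv _ ((Matrix.isUnit_iff_isUnit_det _).mp hB)] using h2

lemma proj_const {B P : ℤ → Matrix (Fin d) (Fin d) ℝ}
    (hB : ∀ n, IsUnit (B n)) (hP : IsInvProjector B P)
    (Q : Matrix (Fin d) (Fin d) ℝ) (hQ0 : P 0 = Q)
    (hcom : ∀ k : ℤ, Q * B k = B k * Q) : ∀ k : ℤ, P k = Q := by
  intro k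
  induction k using Int.induction_on with
  | zero => exact hQ0
  | succ n ih =>
      have h := (hP n).2
      rw [ih, ← hcom] at h
      exact cancel_right _ (hB n) h
  | pred n ih =>
      have h := (hP (-(n:ℤ) - 1)).2
      rw [sub_add_cancel, ih, hcom] at h
      exact (cancel_left _ (hB _) h).symm

lemma transOp_zero (n : ℤ) : transOp A n 0 = Phi A n := by
  unfold transOp
  rw [phi_zero]
  simp

def Sset {d : ℕ} (A : ℤ → Matrix (Fin d) (Fin d) ℝ) (γ : ℝ) : Set (Fin d → ℝ) :=
  {ξ | ∃ C : ℝ, ∀ n : ℕ, ‖(Phi A n).mulVec ξ‖ ≤ C * γ^n}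

lemma phi_unscale (hA : ∀ n, IsUnit (A n)) {γ : ℝ} (hγ : 0 < γ) (k : ℤ) :
    Phi A k = γ ^ k • Phi (fun n => γ⁻¹ • A n) k := by
  rw [phi_smul' A hA hγ, smul_smul, ← zpow_add₀ hγ.ne', add_neg_cancel, zpow_zero, one_smul]

lemma zpow_nat_le_one {ρ : ℝ} (hρ0 : 0 < ρ) (hρ1 : ρ < 1) (n : ℕ) : ρ ^ (n:ℤ) ≤ 1 := by
  rw [zpow_natCast]
  exact pow_le_one₀ hρ0.le hρ1.le

lemma stable_char (hA : ∀ n, IsUnit (A n)) {γ : ℝ} (hγ : 0 < γ)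
    {P : ℤ → Matrix (Fin d) (Fin d) ℝ} {K ρ : ℝ}
    (hED : ExpDichotomy (fun n => γ⁻¹ • A n) P K ρ) (ξ : Fin d → ℝ) :
    ξ ∈ Sset A γ ↔ (P 0).mulVec ξ = ξ := by
  set B := fun n : ℤ => γ⁻¹ • A n with hBdef
  have hB : ∀ n, IsUnit (B n) := fun n => smul_isUnit _ (inv_ne_zero hγ.ne') (hA n)
  obtain ⟨hP, hK, hρ0, hρ1, hst, hun⟩ := hED
  have hnorm : ∀ n : ℕ, ‖(Phi A n).mulVec ξ‖ = γ ^ (n:ℕ) * ‖(Phi B n).mulVec ξ‖ := by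
    intro n
    rw [phi_unscale A hA hγ, Matrix.smul_mulVec, norm_smul, Real.norm_eq_abs,
      abs_of_pos (zpow_pos hγ _), zpow_natCast]
  constructor
  · rintro ⟨C, hC⟩
    have hC0 : 0 ≤ C := by
      have h00 := hC 0
      rw [show ((0:ℕ):ℤ) = (0:ℤ) by norm_num, phi_zero, Matrix.one_mulVec, pow_zero,
        mul_one] at h00
      exact le_trans (norm_nonneg ξ) h00
    set η := ξ - (P 0).mulVec ξ with hη
    have hkey : ∀ n : ℕ, ‖η‖ ≤ (K * C) * ρ ^ n := by
      intro n
      have e0 : (Phi B (n:ℤ)).mulVec ((P 0).mulVec ξ)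
          = (P (n:ℤ)).mulVec ((Phi B (n:ℤ)).mulVec ξ) := by
        rw [Matrix.mulVec_mulVec, Matrix.mulVec_mulVec, proj_comm_phi hB hP n]
      have e1 : (Phi B (n:ℤ)).mulVec η = (1 - P (n:ℤ)).mulVec ((Phi B (n:ℤ)).mulVec ξ) := by
        rw [hη, Matrix.mulVec_sub, Matrix.sub_mulVec, Matrix.one_mulVec, e0]
      have e2 : η = (transOp B 0 (n:ℤ) * (1 - P (n:ℤ))).mulVec ((Phi B (n:ℤ)).mulVec ξ) := by
        have e3 : η = (transOp B 0 (n:ℤ)).mulVec ((Phi B (n:ℤ)).mulVec η) := by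
          rw [Matrix.mulVec_mulVec, transOp_phi B hB 0 (n:ℤ), phi_zero, Matrix.one_mulVec]
        rw [e3, e1, Matrix.mulVec_mulVec, Matrix.mulVec_mulVec, mul_assoc]
      have e4 : ‖(Phi B (n:ℤ)).mulVec ξ‖ ≤ C := by
        have h5 := hC n
        rw [hnorm n] at h5
        have := (mul_le_mul_iff_right₀ (pow_pos hγ n)).mp (by linarith [h5] : γ ^ n * ‖(Phi B (n:ℤ)).mulVec ξ‖ ≤ γ ^ n * C)
        linarith
      calc ‖η‖ = ‖(transOp B 0 (n:ℤ) * (1 - P (n:ℤ))).mulVec ((Phi B (n:ℤ)).mulVec ξ)‖ := by rw [← e2]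
      _ ≤ ‖transOp B 0 (n:ℤ) * (1 - P (n:ℤ))‖ * ‖(Phi B (n:ℤ)).mulVec ξ‖ :=
            Matrix.linfty_opNorm_mulVec _ _
      _ ≤ (K * ρ ^ ((n:ℤ) - 0)) * C := by
            refine mul_le_mul (by simpa using hun 0 (n:ℤ) (by positivity)) e4 (norm_nonneg _) ?_
            positivity
      _ = (K * C) * ρ ^ n := by rw [sub_zero, zpow_natCast]; ring
    have hlim : Filter.Tendsto (fun n : ℕ => (K * C) * ρ ^ n) Filter.atTop (nhds 0) := by
      simpa using (tendsto_pow_atTop_nhds_zero_of_lt_one hρ0.le hρ1).const_mul (K * C)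
    have h0 : ‖η‖ ≤ 0 := ge_of_tendsto' hlim hkey
    have : η = 0 := by
      have := le_antisymm h0 (norm_nonneg η)
      simpa using this
    rw [hη] at this
    exact (sub_eq_zero.mp this).symm
  · intro hfix
    refine ⟨K * ‖ξ‖, fun n => ?_⟩
    have e1 : (Phi B n).mulVec ξ = (transOp B (n:ℤ) 0 * P 0).mulVec ξ := by
      rw [transOp_zero, ← Matrix.mulVec_mulVec, hfix]
    have e2 : ‖(Phi B n).mulVec ξ‖ ≤ K * ρ ^ (n:ℤ) * ‖ξ‖ := by
      rw [e1]
      calc ‖(transOp B (n:ℤ) 0 * P 0).mulVec ξ‖ ≤ ‖transOp B (n:ℤ) 0 * P 0‖ * ‖ξ‖ :=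
            Matrix.linfty_opNorm_mulVec _ _
      _ ≤ K * ρ ^ (n:ℤ) * ‖ξ‖ := by
            have := hst (n:ℤ) 0 (by positivity)
            rw [sub_zero] at this
            exact mul_le_mul_of_nonneg_right this (norm_nonneg ξ)
    rw [hnorm n]
    calc γ ^ (n:ℕ) * ‖(Phi B n).mulVec ξ‖ ≤ γ ^ (n:ℕ) * (K * ρ ^ (n:ℤ) * ‖ξ‖) := by
          exact mul_le_mul_of_nonneg_left e2 (by positivity)
    _ ≤ K * ‖ξ‖ * γ ^ n := by
          have h1 : ρ ^ (n:ℤ) ≤ 1 := zpow_nat_le_one hρ0 hρ1 n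
          have h2 : K * ρ ^ (n:ℤ) * ‖ξ‖ ≤ K * ‖ξ‖ := by
            nlinarith [mul_nonneg (sub_nonneg.mpr h1) (mul_nonneg hK.le (norm_nonneg ξ))]
          nlinarith [pow_pos hγ n, pow_nonneg hγ.le n, norm_nonneg ((Phi B n).mulVec ξ)]

lemma zpow_base_le {x y : ℝ} (hx : 0 ≤ x) (hxy : x ≤ y) {m : ℤ} (hm : 0 ≤ m) :
    x ^ m ≤ y ^ m := by
  lift m to ℕ using hm
  rw [zpow_natCast, zpow_natCast]
  exact pow_le_pow_left₀ hx hxy _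

lemma trans_scale (hA : ∀ n, IsUnit (A n)) {γ γ' : ℝ} (hγ : 0 < γ) (hγ' : 0 < γ')
    (k l : ℤ) :
    transOp (fun j => γ'⁻¹ • A j) k l = ((γ/γ') ^ (k-l)) • transOp (fun j => γ⁻¹ • A j) k l := by
  rw [transOp_smul A hA hγ' k l, transOp_smul A hA hγ k l, smul_smul]
  congr 1
  have h3 : (γ/γ')^(k-l) = γ^(k-l) * γ'^(l-k) := by
    rw [div_zpow, div_eq_mul_inv, ← zpow_neg, neg_sub]
  rw [h3, mul_assoc, mul_comm (γ'^(l-k)) (γ^(l-k)), ← mul_assoc, ← zpow_add₀ hγ.ne']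
  simp [show k-l+(l-k) = 0 by ring]

lemma ed_transport (hA : ∀ n, IsUnit (A n)) {γ γ' K ρ : ℝ}
    {P : ℤ → Matrix (Fin d) (Fin d) ℝ}
    (hγ : 0 < γ) (hγ' : 0 < γ')
    (hED : ExpDichotomy (fun n => γ⁻¹ • A n) P K ρ)
    (h1 : ρ * γ < γ') (h2 : γ' < γ / ρ) :
    ExpDichotomy (fun n => γ'⁻¹ • A n) P K (max (ρ*γ/γ') (ρ*γ'/γ)) := by
  obtain ⟨hP, hK, hρ0, hρ1, hst, hun⟩ := hED
  set ρ' := max (ρ*γ/γ') (ρ*γ'/γ) with hρ'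
  have hρ'0 : 0 < ρ' := lt_max_of_lt_left (by positivity)
  have hρ'1 : ρ' < 1 := by
    apply max_lt
    · rw [div_lt_one hγ']; exact h1
    · rw [div_lt_one hγ]
      calc ρ * γ' < ρ * (γ / ρ) := by exact (mul_lt_mul_iff_right₀ hρ0).mpr h2
      _ = γ := by field_simp
  have hP' : IsInvProjector (fun n => γ'⁻¹ • A n) P := by
    intro k
    refine ⟨(hP k).1, ?_⟩
    have h := (hP k).2
    simp only [mul_smul_comm, smul_mul_assoc] at h ⊢
    have h2 : P (k+1) * A k = A k * P k := by
      have := congrArg (fun X => γ • X) h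
      simpa [smul_smul, mul_inv_cancel₀ hγ.ne'] using this
    rw [h2]
  refine ⟨hP', hK, hρ'0, hρ'1, ?_, ?_⟩
  · intro k l hkl
    rw [trans_scale A hA hγ hγ' k l, smul_mul_assoc, norm_smul, Real.norm_eq_abs,
      abs_of_pos (zpow_pos (by positivity) _)]
    calc (γ/γ') ^ (k-l) * ‖transOp (fun j => γ⁻¹ • A j) k l * P l‖
        ≤ (γ/γ') ^ (k-l) * (K * ρ ^ (k-l)) := by
          exact mul_le_mul_of_nonneg_left (hst k l hkl) (zpow_pos (by positivity) _).le
    _ = K * (ρ * γ / γ') ^ (k-l) := by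
          rw [show ρ * γ / γ' = ρ * (γ/γ') by ring, mul_zpow]; ring
    _ ≤ K * ρ' ^ (k-l) := by
          refine mul_le_mul_of_nonneg_left ?_ hK.le
          exact zpow_base_le (by positivity) (le_max_left _ _) (by omega)
  · intro k l hkl
    rw [trans_scale A hA hγ hγ' k l, smul_mul_assoc, norm_smul, Real.norm_eq_abs,
      abs_of_pos (zpow_pos (by positivity) _)]
    have hflip : ((γ/γ') : ℝ) ^ (k-l) = (γ'/γ) ^ (l-k) := by
      rw [← neg_sub l k, zpow_neg, ← inv_zpow, inv_div]
    calc (γ/γ') ^ (k-l) * ‖transOp (fun j => γ⁻¹ • A j) k l * (1 - P l)‖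
        ≤ (γ/γ') ^ (k-l) * (K * ρ ^ (l-k)) := by
          exact mul_le_mul_of_nonneg_left (hun k l hkl) (zpow_pos (by positivity) _).le
    _ = K * (ρ * γ' / γ) ^ (l-k) := by
          rw [hflip, show ρ * γ' / γ = ρ * (γ'/γ) by ring, mul_zpow]; ring
    _ ≤ K * ρ' ^ (l-k) := by
          refine mul_le_mul_of_nonneg_left ?_ hK.le
          exact zpow_base_le (by positivity) (le_max_right _ _) (by omega)

lemma norm_transOp_le_z (hA : ∀ n, IsUnit (A n)) (M : ℝ)
    (hbd : ∀ n : ℤ, ‖A n‖ ≤ M ∧ ‖(A n)⁻¹‖ ≤ M) (hd : 0 < d) {k l : ℤ} (h : l ≤ k) :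
    ‖transOp A k l‖ ≤ M ^ (k-l) ∧ ‖transOp A l k‖ ≤ M ^ (k-l) := by
  obtain ⟨n, hn⟩ : ∃ n : ℕ, k = l + n := ⟨(k-l).toNat, by omega⟩
  subst hn
  have h2 := norm_transOp_le A hA M hbd hd l n
  rw [show l + (n:ℤ) - l = (n:ℤ) by ring, zpow_natCast]
  exact h2

lemma ed_large (hA : ∀ n, IsUnit (A n)) (M : ℝ)
    (hbd : ∀ n : ℤ, ‖A n‖ ≤ M ∧ ‖(A n)⁻¹‖ ≤ M) (hd : 0 < d) {γ : ℝ} (hγM : M < γ) :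
    ExpDichotomy (fun n => γ⁻¹ • A n) (fun _ => 1) 1 (M/γ) := by
  have hM1 : 1 ≤ M := M_ge_one A hA M hbd hd
  have hγ : 0 < γ := lt_of_lt_of_le zero_lt_one (le_of_lt (lt_of_le_of_lt hM1 hγM))
  refine ⟨fun k => by simp, one_pos, by positivity, (div_lt_one hγ).mpr hγM, ?_, ?_⟩
  · intro k l hkl
    rw [mul_one, transOp_smul A hA hγ, norm_smul, Real.norm_eq_abs,
      abs_of_pos (zpow_pos hγ _), one_mul]
    calc γ ^ (l-k) * ‖transOp A k l‖ ≤ γ ^ (l-k) * M ^ (k-l) :=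
          mul_le_mul_of_nonneg_left (norm_transOp_le_z A hA M hbd hd hkl).1
            (zpow_pos hγ _).le
    _ = (M/γ) ^ (k-l) := by
          rw [div_zpow, div_eq_mul_inv, ← zpow_neg, neg_sub, mul_comm]
  · intro k l hkl
    simp only [sub_self, mul_zero, norm_zero]
    positivity
lemma ed_small (hA : ∀ n, IsUnit (A n)) (M : ℝ)
    (hbd : ∀ n : ℤ, ‖A n‖ ≤ M ∧ ‖(A n)⁻¹‖ ≤ M) (hd : 0 < d) {γ : ℝ} (hγ : 0 < γ)
    (hγM : γ * M < 1) :
    ExpDichotomy (fun n => γ⁻¹ • A n) (fun _ => 0) 1 (γ * M) := by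
  have hM1 : 1 ≤ M := M_ge_one A hA M hbd hd
  refine ⟨fun k => by simp, one_pos, by positivity, hγM, ?_, ?_⟩
  · intro k l hkl
    simp only [mul_zero, norm_zero]
    positivity
  · intro k l hkl
    rw [sub_zero, mul_one, transOp_smul A hA hγ, norm_smul, Real.norm_eq_abs,
      abs_of_pos (zpow_pos hγ _), one_mul]
    calc γ ^ (l-k) * ‖transOp A k l‖ ≤ γ ^ (l-k) * M ^ (l-k) :=
          mul_le_mul_of_nonneg_left (norm_transOp_le_z A hA M hbd hd hkl).2
            (zpow_pos hγ _).le
    _ = (γ * M) ^ (l-k) := (mul_zpow _ _ _).symm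

lemma eq_one_of_mulVec_id {X : Matrix (Fin d) (Fin d) ℝ}
    (h : ∀ ξ : Fin d → ℝ, X.mulVec ξ = ξ) : X = 1 := by
  ext i j
  have h1 := congrFun (h (Pi.single j 1)) i
  rw [Matrix.mulVec_single] at h1
  simp only [Pi.smul_apply, Matrix.col_apply, MulOpposite.op_one, one_smul] at h1
  rw [h1, Matrix.one_apply]
  by_cases hij : i = j
  · subst hij; simp
  · simp [Pi.single_apply, hij]

lemma eq_zero_of_mulVec_zero {X : Matrix (Fin d) (Fin d) ℝ}
    (h : ∀ ξ : Fin d → ℝ, X.mulVec ξ = 0) : X = 0 := by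
  ext i j
  have h1 := congrFun (h (Pi.single j 1)) i
  rw [Matrix.mulVec_single] at h1
  simpa using h1

lemma sset_const (hA : ∀ n, IsUnit (A n)) {c e : ℝ} (hc : 0 < c) (hce : c ≤ e)
    (h : ∀ γ : ℝ, γ ∈ Set.Icc c e →
      ∃ (P : ℤ → Matrix (Fin d) (Fin d) ℝ) (K ρ : ℝ), ExpDichotomy (fun n => γ⁻¹ • A n) P K ρ) :
    Sset A c = Sset A e := by
  haveI : PreconnectedSpace (Set.Icc c e) := Subtype.preconnectedSpace isPreconnected_Icc
  set f : Set.Icc c e → Set (Fin d → ℝ) := fun x => Sset A x.1 with hf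
  have hlc : IsLocallyConstant f := by
    rw [IsLocallyConstant.iff_exists_open]
    intro x
    obtain ⟨P, K, ρ, hED⟩ := h x.1 x.2
    have hx0 : 0 < (x.1:ℝ) := lt_of_lt_of_le hc x.2.1
    have hρ0 : 0 < ρ := hED.2.2.1
    have hρ1 : ρ < 1 := hED.2.2.2.1
    refine ⟨Subtype.val ⁻¹' Set.Ioo (ρ * x.1) (x.1 / ρ),
      isOpen_Ioo.preimage continuous_subtype_val, ⟨?_, ?_⟩, ?_⟩
    · nlinarith
    · rw [lt_div_iff₀ hρ0]; nlinarith
    · intro y hy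
      have hy0 : 0 < (y.1:ℝ) := lt_of_lt_of_le hc y.2.1
      have hEDy := ed_transport A hA hx0 hy0 hED hy.1 hy.2
      show Sset A y.1 = Sset A x.1
      ext ξ
      rw [stable_char A hA hy0 hEDy ξ, stable_char A hA hx0 hED ξ]
  have := hlc.apply_eq_of_preconnectedSpace ⟨c, by constructor <;> linarith⟩
    ⟨e, by constructor <;> linarith⟩
  exact this

lemma sset_univ_of_gap (hA : ∀ n, IsUnit (A n)) (M : ℝ)
    (hbd : ∀ n : ℤ, ‖A n‖ ≤ M ∧ ‖(A n)⁻¹‖ ≤ M) (hd : 0 < d) {γ : ℝ} (hγ : 0 < γ)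
    (hgap : ∀ γ' : ℝ, γ ≤ γ' →
      ∃ (P : ℤ → Matrix (Fin d) (Fin d) ℝ) (K ρ : ℝ), ExpDichotomy (fun n => γ'⁻¹ • A n) P K ρ) :
    Sset A γ = Set.univ := by
  set e := max γ M + 1 with he
  have hMe : M < e := by
    have : M ≤ max γ M := le_max_right _ _
    linarith
  have hγe : γ ≤ e := by
    have : γ ≤ max γ M := le_max_left _ _
    linarith
  have h1 : Sset A γ = Sset A e :=
    sset_const A hA hγ hγe (fun x hx => hgap x hx.1)
  have hEDe := ed_large A hA M hbd hd hMe
  have he0 : (0:ℝ) < e := lt_of_le_of_lt (le_trans zero_le_one (M_ge_one A hA M hbd hd)) hMe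
  rw [h1]
  apply Set.eq_univ_of_forall
  intro ξ
  rw [stable_char A hA he0 hEDe ξ, Matrix.one_mulVec]

lemma sset_zero_of_gap (hA : ∀ n, IsUnit (A n)) (M : ℝ)
    (hbd : ∀ n : ℤ, ‖A n‖ ≤ M ∧ ‖(A n)⁻¹‖ ≤ M) (hd : 0 < d) {γ : ℝ} (hγ : 0 < γ)
    (hgap : ∀ γ' : ℝ, 0 < γ' → γ' ≤ γ →
      ∃ (P : ℤ → Matrix (Fin d) (Fin d) ℝ) (K ρ : ℝ), ExpDichotomy (fun n => γ'⁻¹ • A n) P K ρ) :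
    Sset A γ = {0} := by
  have hM1 : 1 ≤ M := M_ge_one A hA M hbd hd
  set c := min γ (1/(2*M)) with hc
  have hc0 : 0 < c := lt_min hγ (by positivity)
  have hcM : c * M < 1 := by
    have h2 : c ≤ 1/(2*M) := min_le_right _ _
    have : c * M ≤ (1/(2*M)) * M := mul_le_mul_of_nonneg_right h2 (by linarith)
    have hMM : (1/(2*M)) * M = 1/2 := by field_simp
    linarith
  have h1 : Sset A c = Sset A γ :=
    sset_const A hA hc0 (min_le_left _ _)
      (fun x hx => hgap x (lt_of_lt_of_le hc0 hx.1) hx.2)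
  have hEDc := ed_small A hA M hbd hd hc0 hcM
  rw [← h1]
  ext ξ
  rw [Set.mem_singleton_iff, stable_char A hA hc0 hEDc ξ, Matrix.zero_mulVec]
  exact comm

lemma proj_one_of_gap (hA : ∀ n, IsUnit (A n)) {γ K ρ : ℝ}
    {P : ℤ → Matrix (Fin d) (Fin d) ℝ} (hγ : 0 < γ)
    (hED : ExpDichotomy (fun n => γ⁻¹ • A n) P K ρ) (hS : Sset A γ = Set.univ) :
    ∀ k : ℤ, P k = 1 := by
  have hB : ∀ n : ℤ, IsUnit (γ⁻¹ • A n) := fun n => smul_isUnit _ (inv_ne_zero hγ.ne') (hA n)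
  have h0 : P 0 = 1 := by
    apply eq_one_of_mulVec_id
    intro ξ
    exact (stable_char A hA hγ hED ξ).mp (hS ▸ Set.mem_univ ξ)
  exact proj_const hB hED.1 1 h0 (fun k => by rw [one_mul, mul_one])

lemma proj_zero_of_gap (hA : ∀ n, IsUnit (A n)) {γ K ρ : ℝ}
    {P : ℤ → Matrix (Fin d) (Fin d) ℝ} (hγ : 0 < γ)
    (hED : ExpDichotomy (fun n => γ⁻¹ • A n) P K ρ) (hS : Sset A γ = {0}) :
    ∀ k : ℤ, P k = 0 := by
  have hB : ∀ n : ℤ, IsUnit (γ⁻¹ • A n) := fun n => smul_isUnit _ (inv_ne_zero hγ.ne') (hA n)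
  have h0 : P 0 = 0 := by
    apply eq_zero_of_mulVec_zero
    intro ξ
    have hidem : (P 0).mulVec ((P 0).mulVec ξ) = (P 0).mulVec ξ := by
      rw [Matrix.mulVec_mulVec, (hED.1 0).1]
    have := (stable_char A hA hγ hED ((P 0).mulVec ξ)).mpr hidem
    rw [hS] at this
    exact this
  exact proj_const hB hED.1 0 h0 (fun k => by rw [zero_mul, mul_zero])

lemma transOp_comp (hA : ∀ n, IsUnit (A n)) (k l j : ℤ) :
    transOp A k l * transOp A l j = transOp A k j := by
  unfold transOp
  rw [mul_assoc, ← mul_assoc (Phi A l)⁻¹,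
    Matrix.nonsing_inv_mul _ ((Matrix.isUnit_iff_isUnit_det _).mp (phi_isUnit A hA l)), one_mul]

lemma norm_transA_eq (hA : ∀ n, IsUnit (A n)) {γ : ℝ} (hγ : 0 < γ) (k l : ℤ) :
    ‖transOp A k l‖ = γ^(k-l) * ‖transOp (fun j => γ⁻¹ • A j) k l‖ := by
  rw [transOp_smul A hA hγ k l, norm_smul, Real.norm_eq_abs, abs_of_pos (zpow_pos hγ _),
    ← mul_assoc, ← zpow_add₀ hγ.ne', show (k-l)+(l-k) = 0 by ring, zpow_zero, one_mul]

lemma rpow_zpow_inv {γ : ℝ} (hγ : 0 < γ) {N : ℤ} (hN : 0 < N) :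
    (γ ^ N) ^ ((N:ℝ)⁻¹) = γ := by
  have hN0 : ((N:ℝ)) ≠ 0 := Int.cast_ne_zero.mpr hN.ne'
  rw [← Real.rpow_intCast γ N, ← Real.rpow_mul hγ.le, mul_inv_cancel₀ hN0, Real.rpow_one]

lemma xpos (hA : ∀ n, IsUnit (A n)) {ξ : Fin d → ℝ} (hξ : ξ ≠ 0) (m : ℤ) :
    0 < ‖(transOp A m 0).mulVec ξ‖ := by
  rw [norm_pos_iff]
  intro h
  apply hξ
  have h2 : ((Phi A m)⁻¹).mulVec ((Phi A m).mulVec ξ) = ξ := by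
    rw [Matrix.mulVec_mulVec,
      Matrix.nonsing_inv_mul _ ((Matrix.isUnit_iff_isUnit_det _).mp (phi_isUnit A hA m)),
      Matrix.one_mulVec]
  rw [transOp_zero] at h
  rw [← h2, h, Matrix.mulVec_zero]

instance bohl_neBot : bohlFilter.NeBot := by
  refine Filter.comap_neBot (fun t ht => ?_)
  rcases Filter.mem_atTop_sets.mp ht with ⟨n0, hn0⟩
  exact ⟨(0, n0), by simpa using hn0 n0 le_rfl⟩

lemma bohl_eventually {pred : ℤ → Prop} (h : ∀ᶠ N in Filter.atTop, pred N) :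
    ∀ᶠ p in bohlFilter, pred (p.2 - p.1) :=
  h.comap (fun p : ℤ × ℤ => p.2 - p.1)

lemma upper_est (hA : ∀ n, IsUnit (A n)) {ξ : Fin d → ℝ} (hξ : ξ ≠ 0)
    {γ : ℝ} (hγ : 0 < γ) {P : ℤ → Matrix (Fin d) (Fin d) ℝ} {K ρ : ℝ}
    (hED : ExpDichotomy (fun n => γ⁻¹ • A n) P K ρ) (hP1 : ∀ k, P k = 1) :
    ∀ᶠ p in bohlFilter,
      (‖(transOp A p.2 0).mulVec ξ‖ / ‖(transOp A p.1 0).mulVec ξ‖) ^ (((p.2 - p.1 : ℤ) : ℝ)⁻¹)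
        ≤ γ := by
  obtain ⟨hP, hK, hρ0, hρ1, hst, hun⟩ := hED
  have hlim : Filter.Tendsto (fun n : ℕ => K * ρ^n) Filter.atTop (nhds 0) := by
    simpa using (tendsto_pow_atTop_nhds_zero_of_lt_one hρ0.le hρ1).const_mul K
  have hev1 : ∀ᶠ n : ℕ in Filter.atTop, K * ρ^n ≤ 1 :=
    hlim.eventually (eventually_le_nhds (by norm_num))
  obtain ⟨N₀, hN₀⟩ := Filter.eventually_atTop.mp hev1
  have hev2 : ∀ᶠ p in bohlFilter, (max (N₀:ℤ) 1) ≤ p.2 - p.1 :=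
    bohl_eventually (Filter.eventually_ge_atTop _)
  refine hev2.mono ?_
  rintro ⟨m, n⟩ hp
  simp only at hp ⊢
  set N := n - m with hN
  have hN1 : 1 ≤ N := le_trans (le_max_right _ _) hp
  have hNn : ((N.toNat : ℤ)) = N := Int.toNat_of_nonneg (by omega)
  have hKρN : K * ρ ^ N ≤ 1 := by
    rw [← hNn, zpow_natCast]
    exact hN₀ N.toNat (by omega)
  have h1 : ‖transOp (fun j => γ⁻¹ • A j) n m‖ ≤ K * ρ^(n-m) := by
    have := hst n m (by omega)
    rwa [hP1, mul_one] at this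
  have h2 : ‖transOp A n m‖ ≤ γ^N := by
    rw [norm_transA_eq A hA hγ n m]
    calc γ^(n-m) * ‖transOp (fun j => γ⁻¹ • A j) n m‖ ≤ γ^(n-m) * (K * ρ^(n-m)) :=
          mul_le_mul_of_nonneg_left h1 (zpow_pos hγ _).le
    _ ≤ γ^N * 1 := mul_le_mul_of_nonneg_left hKρN (zpow_pos hγ _).le
    _ = γ^N := mul_one _
  have h4 : ‖(transOp A n 0).mulVec ξ‖ ≤ γ^N * ‖(transOp A m 0).mulVec ξ‖ := by
    have e : (transOp A n 0).mulVec ξ = (transOp A n m).mulVec ((transOp A m 0).mulVec ξ) := by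
      rw [Matrix.mulVec_mulVec, transOp_comp A hA]
    rw [e]
    calc ‖(transOp A n m).mulVec ((transOp A m 0).mulVec ξ)‖
        ≤ ‖transOp A n m‖ * ‖(transOp A m 0).mulVec ξ‖ := Matrix.linfty_opNorm_mulVec _ _
    _ ≤ γ^N * ‖(transOp A m 0).mulVec ξ‖ := mul_le_mul_of_nonneg_right h2 (norm_nonneg _)
  have hratio : ‖(transOp A n 0).mulVec ξ‖ / ‖(transOp A m 0).mulVec ξ‖ ≤ γ^N :=
    (div_le_iff₀ (xpos A hA hξ m)).mpr (by rw [mul_comm] at h4 ⊢; exact h4)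
  calc (‖(transOp A n 0).mulVec ξ‖ / ‖(transOp A m 0).mulVec ξ‖) ^ (((N : ℤ) : ℝ)⁻¹)
      ≤ (γ^N) ^ (((N : ℤ) : ℝ)⁻¹) := by
        refine Real.rpow_le_rpow (by positivity) hratio ?_
        rw [inv_nonneg]
        exact_mod_cast (by omega : (0:ℤ) ≤ N)
  _ = γ := rpow_zpow_inv hγ (by omega)

lemma lower_est (hA : ∀ n, IsUnit (A n)) {ξ : Fin d → ℝ} (hξ : ξ ≠ 0)
    {γ : ℝ} (hγ : 0 < γ) {P : ℤ → Matrix (Fin d) (Fin d) ℝ} {K ρ : ℝ}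
    (hED : ExpDichotomy (fun n => γ⁻¹ • A n) P K ρ) (hP0 : ∀ k, P k = 0) :
    ∀ᶠ p in bohlFilter,
      γ ≤ (‖(transOp A p.2 0).mulVec ξ‖ / ‖(transOp A p.1 0).mulVec ξ‖)
        ^ (((p.2 - p.1 : ℤ) : ℝ)⁻¹) := by
  obtain ⟨hP, hK, hρ0, hρ1, hst, hun⟩ := hED
  have hlim : Filter.Tendsto (fun n : ℕ => K * ρ^n) Filter.atTop (nhds 0) := by
    simpa using (tendsto_pow_atTop_nhds_zero_of_lt_one hρ0.le hρ1).const_mul K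
  have hev1 : ∀ᶠ n : ℕ in Filter.atTop, K * ρ^n ≤ 1 :=
    hlim.eventually (eventually_le_nhds (by norm_num))
  obtain ⟨N₀, hN₀⟩ := Filter.eventually_atTop.mp hev1
  have hev2 : ∀ᶠ p in bohlFilter, (max (N₀:ℤ) 1) ≤ p.2 - p.1 :=
    bohl_eventually (Filter.eventually_ge_atTop _)
  refine hev2.mono ?_
  rintro ⟨m, n⟩ hp
  simp only at hp ⊢
  set N := n - m with hN
  have hN1 : 1 ≤ N := le_trans (le_max_right _ _) hp
  have hNn : ((N.toNat : ℤ)) = N := Int.toNat_of_nonneg (by omega)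
  have hKρN : K * ρ ^ N ≤ 1 := by
    rw [← hNn, zpow_natCast]
    exact hN₀ N.toNat (by omega)
  have h1 : ‖transOp (fun j => γ⁻¹ • A j) m n‖ ≤ K * ρ^(n-m) := by
    have := hun m n (by omega)
    rwa [hP0, sub_zero, mul_one] at this
  have h2 : ‖transOp A m n‖ ≤ γ^(m-n) * (K * ρ^N) := by
    rw [norm_transA_eq A hA hγ m n]
    exact mul_le_mul_of_nonneg_left h1 (zpow_pos hγ _).le
  have h4 : ‖(transOp A m 0).mulVec ξ‖
      ≤ (γ^(m-n) * (K * ρ^N)) * ‖(transOp A n 0).mulVec ξ‖ := by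
    have e : (transOp A m 0).mulVec ξ = (transOp A m n).mulVec ((transOp A n 0).mulVec ξ) := by
      rw [Matrix.mulVec_mulVec, transOp_comp A hA]
    rw [e]
    calc ‖(transOp A m n).mulVec ((transOp A n 0).mulVec ξ)‖
        ≤ ‖transOp A m n‖ * ‖(transOp A n 0).mulVec ξ‖ := Matrix.linfty_opNorm_mulVec _ _
    _ ≤ (γ^(m-n) * (K * ρ^N)) * ‖(transOp A n 0).mulVec ξ‖ :=
          mul_le_mul_of_nonneg_right h2 (norm_nonneg _)
  have h5 : γ^N * ‖(transOp A m 0).mulVec ξ‖ ≤ ‖(transOp A n 0).mulVec ξ‖ := by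
    have h6 := mul_le_mul_of_nonneg_left h4 (zpow_pos hγ N).le
    have h7 : γ^N * ((γ^(m-n) * (K * ρ^N)) * ‖(transOp A n 0).mulVec ξ‖)
        = (K * ρ^N) * ‖(transOp A n 0).mulVec ξ‖ := by
      rw [← mul_assoc, ← mul_assoc, ← zpow_add₀ hγ.ne', show N + (m-n) = 0 by omega,
        zpow_zero, one_mul]
    rw [h7] at h6
    calc γ^N * ‖(transOp A m 0).mulVec ξ‖ ≤ (K * ρ^N) * ‖(transOp A n 0).mulVec ξ‖ := h6
    _ ≤ 1 * ‖(transOp A n 0).mulVec ξ‖ := mul_le_mul_of_nonneg_right hKρN (norm_nonneg _)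
    _ = _ := one_mul _
  have hratio : γ^N ≤ ‖(transOp A n 0).mulVec ξ‖ / ‖(transOp A m 0).mulVec ξ‖ :=
    (le_div_iff₀ (xpos A hA hξ m)).mpr h5
  calc γ = (γ^N) ^ (((N : ℤ) : ℝ)⁻¹) := (rpow_zpow_inv hγ (by omega)).symm
  _ ≤ (‖(transOp A n 0).mulVec ξ‖ / ‖(transOp A m 0).mulVec ξ‖) ^ (((N : ℤ) : ℝ)⁻¹) := by
        refine Real.rpow_le_rpow (zpow_pos hγ _).le hratio ?_
        rw [inv_nonneg]
        exact_mod_cast (by omega : (0:ℤ) ≤ N)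

lemma bound_est (hA : ∀ n, IsUnit (A n)) (M : ℝ)
    (hbd : ∀ n : ℤ, ‖A n‖ ≤ M ∧ ‖(A n)⁻¹‖ ≤ M) (hd : 0 < d)
    {ξ : Fin d → ℝ} (hξ : ξ ≠ 0) :
    ∀ᶠ p in bohlFilter,
      (‖(transOp A p.2 0).mulVec ξ‖ / ‖(transOp A p.1 0).mulVec ξ‖) ^ (((p.2 - p.1 : ℤ) : ℝ)⁻¹)
        ≤ M := by
  have hM1 : 1 ≤ M := M_ge_one A hA M hbd hd
  have hev2 : ∀ᶠ p in bohlFilter, (1:ℤ) ≤ p.2 - p.1 :=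
    bohl_eventually (Filter.eventually_ge_atTop _)
  refine hev2.mono ?_
  rintro ⟨m, n⟩ hp
  simp only at hp ⊢
  set N := n - m with hN
  have h2 : ‖transOp A n m‖ ≤ M^N := (norm_transOp_le_z A hA M hbd hd (by omega)).1
  have h4 : ‖(transOp A n 0).mulVec ξ‖ ≤ M^N * ‖(transOp A m 0).mulVec ξ‖ := by
    have e : (transOp A n 0).mulVec ξ = (transOp A n m).mulVec ((transOp A m 0).mulVec ξ) := by
      rw [Matrix.mulVec_mulVec, transOp_comp A hA]
    rw [e]
    calc ‖(transOp A n m).mulVec ((transOp A m 0).mulVec ξ)‖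
        ≤ ‖transOp A n m‖ * ‖(transOp A m 0).mulVec ξ‖ := Matrix.linfty_opNorm_mulVec _ _
    _ ≤ M^N * ‖(transOp A m 0).mulVec ξ‖ := mul_le_mul_of_nonneg_right h2 (norm_nonneg _)
  have hratio : ‖(transOp A n 0).mulVec ξ‖ / ‖(transOp A m 0).mulVec ξ‖ ≤ M^N :=
    (div_le_iff₀ (xpos A hA hξ m)).mpr (by rw [mul_comm] at h4 ⊢; exact h4)
  calc (‖(transOp A n 0).mulVec ξ‖ / ‖(transOp A m 0).mulVec ξ‖) ^ (((N : ℤ) : ℝ)⁻¹)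
      ≤ (M^N) ^ (((N : ℤ) : ℝ)⁻¹) := by
        refine Real.rpow_le_rpow (by positivity) hratio ?_
        rw [inv_nonneg]
        exact_mod_cast (by omega : (0:ℤ) ≤ N)
  _ = M := rpow_zpow_inv (by linarith) (by omega)

theorem stmt8 {d : ℕ} (A : ℤ → Matrix (Fin d) (Fin d) ℝ)
    (hA : ∀ n, IsUnit (A n)) (M : ℝ)
    (hbd : ∀ n : ℤ, ‖A n‖ ≤ M ∧ ‖(A n)⁻¹‖ ≤ M)
    (a b : ℕ → ℝ) (l : ℕ) (hl : 1 ≤ l)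
    (hspec : edSpectrum A = ⋃ j ∈ Finset.Icc 1 l, Set.Icc (a j) (b j))
    (hpos : 0 < a 1) (hab : ∀ j, 1 ≤ j → j ≤ l → a j ≤ b j)
    (hsep : ∀ j, 1 ≤ j → j < l → b j < a (j + 1))
    (ξ : Fin d → ℝ) (hξ : ξ ≠ 0) :
    Set.Icc (lowerBohl A ξ) (upperBohl A ξ) ⊆ Set.Icc (a 1) (b l) := by
  have hd : 0 < d := by
    rcases Nat.eq_zero_or_pos d with h0 | h
    · subst h0; exact absurd (funext fun i => i.elim0) hξ
    · exact h
  have bmono : ∀ i j : ℕ, 1 ≤ i → i ≤ j → j ≤ l → b i ≤ b j := by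
    intro i j h1 hij
    induction j, hij using Nat.le_induction with
    | base => intro _; exact le_rfl
    | succ n hn ih =>
        intro hsl
        have h4 : b n < a (n+1) := hsep n (by omega) (by omega)
        have h5 : a (n+1) ≤ b (n+1) := hab (n+1) (by omega) hsl
        have h6 := ih (by omega)
        linarith
  have amono : ∀ i j : ℕ, 1 ≤ i → i ≤ j → j ≤ l → a i ≤ a j := by
    intro i j h1 hij
    induction j, hij using Nat.le_induction with
    | base => intro _; exact le_rfl
    | succ n hn ih =>
        intro hsl
        have h4 : b n < a (n+1) := hsep n (by omega) (by omega)
        have h5 : a n ≤ b n := hab n (by omega) (by omega)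
        have h6 := ih (by omega)
        linarith
  have hb_pos : 0 < b l := lt_of_lt_of_le hpos (le_trans (hab 1 le_rfl hl) (bmono 1 l le_rfl hl le_rfl))
  have hnotmem : ∀ γ : ℝ, γ ∉ edSpectrum A → 0 < γ →
      ∃ (P : ℤ → Matrix (Fin d) (Fin d) ℝ) (K ρ : ℝ),
        ExpDichotomy (fun n => γ⁻¹ • A n) P K ρ := by
    intro γ hγ hγ0
    by_contra h
    exact hγ ⟨hγ0, h⟩
  have hgap_up : ∀ γ : ℝ, b l < γ →
      ∃ (P : ℤ → Matrix (Fin d) (Fin d) ℝ) (K ρ : ℝ),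
        ExpDichotomy (fun n => γ⁻¹ • A n) P K ρ := by
    intro γ hγ
    refine hnotmem γ ?_ (lt_trans hb_pos hγ)
    intro hmem
    rw [hspec] at hmem
    simp only [Set.mem_iUnion] at hmem
    obtain ⟨j, hj, hmem⟩ := hmem
    simp only [Finset.mem_Icc] at hj
    have := bmono j l hj.1 hj.2 le_rfl
    have := hmem.2
    linarith
  have hgap_down : ∀ γ : ℝ, 0 < γ → γ < a 1 →
      ∃ (P : ℤ → Matrix (Fin d) (Fin d) ℝ) (K ρ : ℝ),
        ExpDichotomy (fun n => γ⁻¹ • A n) P K ρ := by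
    intro γ hγ0 hγ
    refine hnotmem γ ?_ hγ0
    intro hmem
    rw [hspec] at hmem
    simp only [Set.mem_iUnion] at hmem
    obtain ⟨j, hj, hmem⟩ := hmem
    simp only [Finset.mem_Icc] at hj
    have := amono 1 j le_rfl hj.1 hj.2
    have := hmem.1
    linarith
  have hub : upperBohl A ξ ≤ b l := by
    by_contra hcon
    push_neg at hcon
    set γ := (b l + upperBohl A ξ)/2 with hγdef
    have hγ1 : b l < γ := by rw [hγdef]; linarith
    have hγ2 : γ < upperBohl A ξ := by rw [hγdef]; linarith
    have hγ0 : 0 < γ := lt_trans hb_pos hγ1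
    obtain ⟨P, K, ρ, hED⟩ := hgap_up γ hγ1
    have hSuniv := sset_univ_of_gap A hA M hbd hd hγ0
      (fun γ' hγ' => hgap_up γ' (lt_of_lt_of_le hγ1 hγ'))
    have hP1 := proj_one_of_gap A hA hγ0 hED hSuniv
    have hev := upper_est A hA hξ hγ0 hED hP1
    have hcb : Filter.IsCoboundedUnder (· ≤ ·) bohlFilter (fun p : ℤ × ℤ =>
        (‖(transOp A p.2 0).mulVec ξ‖ / ‖(transOp A p.1 0).mulVec ξ‖)
          ^ (((p.2 - p.1 : ℤ) : ℝ)⁻¹)) :=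
      Filter.isCoboundedUnder_le_of_eventually_le (x := (0:ℝ)) bohlFilter
        (Filter.Eventually.of_forall (fun p =>
          Real.rpow_nonneg (div_nonneg (norm_nonneg _) (norm_nonneg _)) _))
    have hle : upperBohl A ξ ≤ γ := Filter.limsup_le_of_le hcb hev
    linarith
  have hlb : a 1 ≤ lowerBohl A ξ := by
    by_contra hcon
    push_neg at hcon
    set γ := (max (lowerBohl A ξ) 0 + a 1)/2 with hγdef
    have hm0 : 0 ≤ max (lowerBohl A ξ) 0 := le_max_right _ _
    have hγ0 : 0 < γ := by rw [hγdef]; linarith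
    have hγa : γ < a 1 := by
      have hmax : max (lowerBohl A ξ) 0 < a 1 := max_lt hcon hpos
      rw [hγdef]; linarith
    have hγgt : lowerBohl A ξ < γ := by
      have := le_max_left (lowerBohl A ξ) 0
      rw [hγdef]; linarith
    obtain ⟨P, K, ρ, hED⟩ := hgap_down γ hγ0 hγa
    have hS0 := sset_zero_of_gap A hA M hbd hd hγ0
      (fun γ' h0 hle => hgap_down γ' h0 (lt_of_le_of_lt hle hγa))
    have hP0 := proj_zero_of_gap A hA hγ0 hED hS0
    have hev := lower_est A hA hξ hγ0 hED hP0
    have hcb := Filter.isCoboundedUnder_ge_of_eventually_le bohlFilter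
      (bound_est A hA M hbd hd hξ)
    have hge : γ ≤ lowerBohl A ξ := Filter.le_liminf_of_le hcb hev
    linarith
  intro x hx
  exact ⟨le_trans hlb hx.1, le_trans hx.2 hub⟩
end
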